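/- arXiv:0911.3307 — 7 statements merged into one kernel-verified Lean document; each statement's English description precedes it below -/
import Mathlib

section
/- For every integer k ≥ 2 and every A ⊆ X^ω: A is a Π⁰ₖ subset of X^ω if and only if A^b is a Π⁰ₖ subset of (X ∪ {b})^ω. -/
open Set

/-- Finite levels of the Borel hierarchy: index `n` corresponds to level `n+1`.
Index 0 gives (open, closed); index `n+1` gives (countable unions of level-`n` Π sets,
countable intersections of level-`n` Σ sets). -/
def sigmaPiAux (α : Type*) [TopologicalSpace α] : ℕ → (Set α → Prop) × (Set α → Prop)
  | 0 => (fun s => IsOpen s, fun s => IsClosed s)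
  | n + 1 =>
      (fun s => ∃ f : ℕ → Set α, (∀ i, (sigmaPiAux α n).2 (f i)) ∧ s = ⋃ i, f i,
       fun s => ∃ f : ℕ → Set α, (∀ i, (sigmaPiAux α n).1 (f i)) ∧ s = ⋂ i, f i)

/-- The class Σ⁰ₖ of the Borel hierarchy (for `k ≥ 1`). -/
def SigmaClass {α : Type*} [TopologicalSpace α] (k : ℕ) (s : Set α) : Prop :=
  (sigmaPiAux α (k - 1)).1 s

/-- The class Π⁰ₖ of the Borel hierarchy (for `k ≥ 1`). -/
def PiClass {α : Type*} [TopologicalSpace α] (k : ℕ) (s : Set α) : Prop :=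
  (sigmaPiAux α (k - 1)).2 s

/-- A finite word `l` is a prefix of the infinite word `x`. -/
def PrefixOf {α : Type*} (l : List α) (x : ℕ → α) : Prop :=
  ∀ (i : ℕ) (h : i < l.length), l.get ⟨i, h⟩ = x i

/-- The ω-power of a dictionary `V`: infinite concatenations of nonempty words of `V`. -/
def omegaPow {α : Type*} (V : Set (List α)) : Set (ℕ → α) :=
  {x | ∃ u : ℕ → List α, (∀ i, u i ∈ V ∧ u i ≠ []) ∧
        ∀ n, PrefixOf (((List.range n).map u).flatten) x}

/-- Words over `X ∪ {b}` (with `b = none`) containing infinitely many letters of `X`. -/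
def Zinf (X : Type*) : Set (ℕ → Option X) := {x | ∀ N, ∃ m, N ≤ m ∧ (x m).isSome}

/-- The map deleting every occurrence of the letter `b = none`. -/
noncomputable def phi {X : Type*} [Inhabited X] (x : ℕ → Option X) : ℕ → X :=
  fun n => (x (Nat.nth (fun m => (x m).isSome = true) n)).getD default

/-- `A^b = {x ∈ (X ∪ {b})^ω : x(/b) ∈ A}`. -/
def bPower {X : Type*} [Inhabited X] (A : Set (ℕ → X)) : Set (ℕ → Option X) :=
  {x | x ∈ Zinf X ∧ phi x ∈ A}

/-- Wadge reducibility. -/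
def WadgeLE {α β : Type*} [TopologicalSpace α] [TopologicalSpace β]
    (L : Set α) (L' : Set β) : Prop :=
  ∃ f : α → β, Continuous f ∧ L = f ⁻¹' L'

/-- Substitution extended to finite words. -/
def subWord {X Y : Type*} (f : X → Set (List Y)) : List X → Set (List Y)
  | [] => {[]}
  | a :: w => {l | ∃ u v, u ∈ f a ∧ v ∈ subWord f w ∧ l = u ++ v}

/-- Substitution extended to dictionaries. -/
def subLang {X Y : Type*} (f : X → Set (List Y)) (V : Set (List X)) : Set (List Y) :=
  ⋃ w ∈ V, subWord f w

/-- Substitution extended to an infinite word. -/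
def subOmega {X Y : Type*} (f : X → Set (List Y)) (x : ℕ → X) : Set (ℕ → Y) :=
  {y | ∃ u : ℕ → List Y, (∀ i, u i ∈ f (x i)) ∧
        ∀ n, PrefixOf (((List.range n).map u).flatten) y}

/-- Substitution extended to ω-languages. -/
def subOmegaImage {X Y : Type*} (f : X → Set (List Y)) (L : Set (ℕ → X)) : Set (ℕ → Y) :=
  ⋃ x ∈ L, subOmega f x


set_option linter.unusedSectionVars false

section Count

theorem myCountCongr {p q : ℕ → Prop} [DecidablePred p] [DecidablePred q] :
    ∀ {n : ℕ}, (∀ k < n, (p k ↔ q k)) → Nat.count p n = Nat.count q n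
  | 0, _ => rfl
  | n+1, h => by
      rw [Nat.count_succ, Nat.count_succ,
        myCountCongr (fun k hk => h k (Nat.lt_succ_of_lt hk))]
      by_cases hq : q n
      · simp [hq, (h n (Nat.lt_succ_self n)).2 hq]
      · have hnp : ¬ p n := fun hp => hq ((h n (Nat.lt_succ_self n)).1 hp)
        simp [hq, hnp]

theorem nth_agree {p q : ℕ → Prop} (hp : (setOf p).Infinite) {M j : ℕ}
    (hag : ∀ k ≤ M, (p k ↔ q k)) (hj : Nat.nth p j ≤ M) :
    Nat.nth q j = Nat.nth p j := by
  classical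
  have hpj : p (Nat.nth p j) := Nat.nth_mem_of_infinite hp j
  have hqj : q (Nat.nth p j) := (hag _ hj).1 hpj
  have hcount : Nat.count q (Nat.nth p j) = j := by
    rw [← myCountCongr (p := p) (q := q)
      (fun k hk => hag k (le_of_lt (lt_of_lt_of_le hk hj)))]
    exact Nat.count_nth_of_infinite hp j
  calc Nat.nth q j = Nat.nth q (Nat.count q (Nat.nth p j)) := by rw [hcount]
    _ = Nat.nth p j := Nat.nth_count hqj

end Count

section Phi

variable {X : Type} [Inhabited X]

theorem zinf_infinite {x : ℕ → Option X} (hx : x ∈ Zinf X) :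
    {m | (x m).isSome = true}.Infinite := by
  refine Set.infinite_of_not_bddAbove ?_
  rintro ⟨N, hN⟩
  obtain ⟨m, hm, hsome⟩ := hx (N + 1)
  exact absurd (hN hsome) (by omega)

theorem phi_eq_of_agree {x y : ℕ → Option X}
    (hx : {m | (x m).isSome = true}.Infinite) (j : ℕ)
    (hag : ∀ m ≤ Nat.nth (fun m => (x m).isSome = true) j, y m = x m) :
    phi y j = phi x j := by
  have hag' : ∀ k ≤ Nat.nth (fun m => (x m).isSome = true) j,
      ((fun m => (x m).isSome = true) k ↔ (fun m => (y m).isSome = true) k) := by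
    intro k hk; simp only [hag k hk]
  have h := nth_agree hx hag' le_rfl
  show (y (Nat.nth (fun m => (y m).isSome = true) j)).getD default
      = (x (Nat.nth (fun m => (x m).isSome = true) j)).getD default
  rw [h, hag _ le_rfl]

variable [TopologicalSpace X] [DiscreteTopology X]
  [TopologicalSpace (Option X)] [DiscreteTopology (Option X)]

theorem continuousOn_phi : ContinuousOn (phi (X := X)) (Zinf X) := by
  intro x hx
  apply ContinuousAt.continuousWithinAt
  rw [ContinuousAt, tendsto_pi_nhds]
  intro j
  have hinf := zinf_infinite hx
  set M := Nat.nth (fun m => (x m).isSome = true) j with hM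
  have hUeq : {y : ℕ → Option X | ∀ m ≤ M, y m = x m} =
      ⋂ m ∈ Finset.range (M + 1), (fun y : ℕ → Option X => y m) ⁻¹' {x m} := by
    ext y
    simp [Nat.lt_succ_iff]
  have hU : IsOpen {y : ℕ → Option X | ∀ m ≤ M, y m = x m} := by
    rw [hUeq]
    exact isOpen_biInter_finset fun m _ =>
      (continuous_apply m).isOpen_preimage _ (isOpen_discrete _)
  have hmem : {y : ℕ → Option X | ∀ m ≤ M, y m = x m} ∈ nhds x :=
    hU.mem_nhds (fun m _ => rfl)
  have h1 : Filter.Tendsto (fun y => phi y j) (nhds x) (pure (phi x j)) := by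
    rw [Filter.tendsto_pure]
    exact Filter.eventually_of_mem hmem (fun y hy => phi_eq_of_agree hinf j hy)
  exact h1.mono_right (pure_le_nhds _)

end Phi

section Cylinders

variable {Y : Type} [Countable Y] [TopologicalSpace Y] [DiscreteTopology Y]

theorem cyl_closed (w : List Y) : IsClosed {y : ℕ → Y | PrefixOf w y} := by
  have h : {y : ℕ → Y | PrefixOf w y} =
      ⋂ i : Fin w.length, (fun y : ℕ → Y => y i) ⁻¹' {w.get i} := by
    ext y
    simp only [Set.mem_setOf_eq, Set.mem_iInter, Set.mem_preimage, Set.mem_singleton_iff, PrefixOf]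
    exact ⟨fun h i => (h i i.2).symm, fun h i hi => (h ⟨i, hi⟩).symm⟩
  rw [h]
  exact isClosed_iInter fun i =>
    IsClosed.preimage (continuous_apply (i : ℕ)) (isClosed_discrete _)

theorem prefix_map_range (n : ℕ) (x : ℕ → Y) :
    {y : ℕ → Y | PrefixOf ((List.range n).map x) y} = {y | ∀ j < n, y j = x j} := by
  ext y
  simp only [Set.mem_setOf_eq, PrefixOf, List.length_map, List.length_range]
  constructor
  · intro h j hj
    have := h j hj
    simpa using this.symm
  · intro h j hj
    simpa using (h j hj).symm

theorem exists_prefix_subset {U : Set (ℕ → Y)} (hU : IsOpen U) {x : ℕ → Y} (hx : x ∈ U) :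
    ∃ n : ℕ, {y | ∀ i < n, y i = x i} ⊆ U := by
  obtain ⟨I, u, hu, hsub⟩ := isOpen_pi_iff.1 hU x hx
  refine ⟨I.sup id + 1, fun y hy => hsub fun i hi => ?_⟩
  have : y i = x i := hy i (Nat.lt_succ_of_le (Finset.le_sup (f := id) hi))
  rw [this]
  exact (hu i hi).2

theorem open_fsigma {U : Set (ℕ → Y)} (hU : IsOpen U) :
    ∃ f : ℕ → Set (ℕ → Y), (∀ i, IsClosed (f i)) ∧ U = ⋃ i, f i := by
  classical
  obtain ⟨e, he⟩ := exists_surjective_nat (List Y)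
  refine ⟨fun i => if {y | PrefixOf (e i) y} ⊆ U then {y | PrefixOf (e i) y} else ∅,
    fun i => ?_, ?_⟩
  · simp only []
    split
    · exact cyl_closed _
    · exact isClosed_empty
  ext x
  simp only [Set.mem_iUnion]
  constructor
  · intro hx
    obtain ⟨n, hn⟩ := exists_prefix_subset hU hx
    obtain ⟨i, hi⟩ := he ((List.range n).map x)
    refine ⟨i, ?_⟩
    have hsub : {y | PrefixOf (e i) y} ⊆ U := by rw [hi, prefix_map_range]; exact hn
    rw [if_pos hsub]
    rw [hi] at hsub ⊢
    show x ∈ {y : ℕ → Y | PrefixOf ((List.range n).map x) y}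
    rw [prefix_map_range]
    exact fun j _ => rfl
  · rintro ⟨i, hi⟩
    by_cases hsub : {y | PrefixOf (e i) y} ⊆ U
    · rw [if_pos hsub] at hi; exact hsub hi
    · rw [if_neg hsub] at hi; exact absurd hi (Set.notMem_empty x)

end Cylinders

section Classes

variable {α : Type*} [TopologicalSpace α]

theorem sig_to_pi_succ {n : ℕ} {s : Set α} (hs : (sigmaPiAux α n).1 s) :
    (sigmaPiAux α (n + 1)).2 s :=
  ⟨fun _ => s, fun _ => hs, (Set.iInter_const s).symm⟩

theorem pi_to_sig_succ {n : ℕ} {s : Set α} (hs : (sigmaPiAux α n).2 s) :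
    (sigmaPiAux α (n + 1)).1 s :=
  ⟨fun _ => s, fun _ => hs, (Set.iUnion_const s).symm⟩

theorem pii_inter {n : ℕ} {s t : Set α} (hs : (sigmaPiAux α (n + 1)).2 s)
    (ht : (sigmaPiAux α (n + 1)).2 t) : (sigmaPiAux α (n + 1)).2 (s ∩ t) := by
  classical
  obtain ⟨f, hf, rfl⟩ := hs
  obtain ⟨g, hg, rfl⟩ := ht
  refine ⟨fun i => if Even i then f (i / 2) else g (i / 2), fun i => ?_, ?_⟩
  · show (sigmaPiAux α n).1 (if Even i then f (i / 2) else g (i / 2))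
    split
    · exact hf _
    · exact hg _
  · ext x
    simp only [Set.mem_inter_iff, Set.mem_iInter]
    constructor
    · rintro ⟨h1, h2⟩ i
      show x ∈ (if Even i then f (i / 2) else g (i / 2))
      split
      · exact h1 _
      · exact h2 _
    · intro h
      constructor
      · intro j
        have hj := h (2 * j)
        rw [if_pos ⟨j, two_mul j⟩] at hj
        have : 2 * j / 2 = j := by omega
        rwa [this] at hj
      · intro j
        have hj := h (2 * j + 1)
        rw [if_neg (by simp [Nat.even_add_one, parity_simps])] at hj
        have : (2 * j + 1) / 2 = j := by omega
        rwa [this] at hj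

theorem sp_preimage {β : Type*} [TopologicalSpace β] {g : α → β}
    (hg : Continuous g) (n : ℕ) :
    (∀ s, (sigmaPiAux β n).1 s → (sigmaPiAux α n).1 (g ⁻¹' s)) ∧
    (∀ s, (sigmaPiAux β n).2 s → (sigmaPiAux α n).2 (g ⁻¹' s)) := by
  induction n with
  | zero => exact ⟨fun s hs => hs.preimage hg, fun s hs => hs.preimage hg⟩
  | succ n ih =>
    constructor
    · rintro s ⟨f, hf, rfl⟩
      exact ⟨fun i => g ⁻¹' f i, fun i => ih.2 _ (hf i), by rw [Set.preimage_iUnion]⟩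
    · rintro s ⟨f, hf, rfl⟩
      exact ⟨fun i => g ⁻¹' f i, fun i => ih.1 _ (hf i), by rw [Set.preimage_iInter]⟩

end Classes

section Mono

variable {Y : Type} [Countable Y] [TopologicalSpace Y] [DiscreteTopology Y]

theorem sp_mono (n : ℕ) :
    (∀ s : Set (ℕ → Y), (sigmaPiAux (ℕ → Y) n).1 s → (sigmaPiAux (ℕ → Y) (n + 1)).1 s) ∧
    (∀ s : Set (ℕ → Y), (sigmaPiAux (ℕ → Y) n).2 s → (sigmaPiAux (ℕ → Y) (n + 1)).2 s) := by
  induction n with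
  | zero =>
    constructor
    · intro s hs
      obtain ⟨f, hf, hfeq⟩ := open_fsigma hs
      exact ⟨f, fun i => hf i, hfeq⟩
    · intro s hs
      obtain ⟨f, hf, hfeq⟩ := open_fsigma hs.isOpen_compl
      refine ⟨fun i => (f i)ᶜ, fun i => (hf i).isOpen_compl, ?_⟩
      rw [← compl_compl s, hfeq, Set.compl_iUnion]
  | succ n ih =>
    constructor
    · rintro s ⟨f, hf, rfl⟩
      exact ⟨f, fun i => ih.2 _ (hf i), rfl⟩
    · rintro s ⟨f, hf, rfl⟩
      exact ⟨f, fun i => ih.1 _ (hf i), rfl⟩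

theorem pii_le {m n : ℕ} (h : m ≤ n) {s : Set (ℕ → Y)}
    (hs : (sigmaPiAux (ℕ → Y) m).2 s) : (sigmaPiAux (ℕ → Y) n).2 s := by
  induction n with
  | zero => rwa [Nat.le_zero.1 h] at hs
  | succ n ih =>
    rcases Nat.lt_or_ge m (n + 1) with h' | h'
    · exact (sp_mono n).2 _ (ih (Nat.lt_succ_iff.1 h'))
    · rwa [le_antisymm h h'] at hs

end Mono

section Transfer

variable {X : Type} [Inhabited X] [TopologicalSpace X] [DiscreteTopology X]
  [TopologicalSpace (Option X)] [DiscreteTopology (Option X)]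

theorem transfer (n : ℕ) :
    (∀ S : Set (ℕ → X), (sigmaPiAux (ℕ → X) n).1 S →
        ∃ T : Set (ℕ → Option X), (sigmaPiAux (ℕ → Option X) n).1 T ∧
          phi ⁻¹' S ∩ Zinf X = T ∩ Zinf X) ∧
    (∀ S : Set (ℕ → X), (sigmaPiAux (ℕ → X) n).2 S →
        ∃ T : Set (ℕ → Option X), (sigmaPiAux (ℕ → Option X) n).2 T ∧
          phi ⁻¹' S ∩ Zinf X = T ∩ Zinf X) := by
  induction n with
  | zero =>
    constructor
    · intro S hS
      obtain ⟨U, hU, hUeq⟩ := continuousOn_iff'.1 continuousOn_phi S hS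
      exact ⟨U, hU, hUeq⟩
    · intro S hS
      obtain ⟨U, hU, hUeq⟩ := continuousOn_iff'.1 continuousOn_phi Sᶜ hS.isOpen_compl
      refine ⟨Uᶜ, hU.isClosed_compl, ?_⟩
      have h := Set.ext_iff.1 hUeq
      ext x
      have hx := h x
      simp only [Set.mem_inter_iff, Set.mem_preimage, Set.mem_compl_iff] at hx ⊢
      tauto
  | succ n ih =>
    constructor
    · rintro S ⟨f, hf, rfl⟩
      choose T hT hTeq using fun i => ih.2 (f i) (hf i)
      refine ⟨⋃ i, T i, ⟨T, hT, rfl⟩, ?_⟩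
      rw [Set.preimage_iUnion, Set.iUnion_inter, Set.iUnion_inter]
      exact Set.iUnion_congr hTeq
    · rintro S ⟨f, hf, rfl⟩
      choose T hT hTeq using fun i => ih.1 (f i) (hf i)
      refine ⟨⋂ i, T i, ⟨T, hT, rfl⟩, ?_⟩
      rw [Set.preimage_iInter, Set.iInter_inter, Set.iInter_inter]
      exact Set.iInter_congr hTeq

theorem zinf_pi1 : (sigmaPiAux (ℕ → Option X) 1).2 (Zinf X) := by
  refine ⟨fun N => {x | ∃ m, N ≤ m ∧ (x m).isSome = true}, fun N => ?_, ?_⟩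
  · show IsOpen {x : ℕ → Option X | ∃ m, N ≤ m ∧ (x m).isSome = true}
    have heq : {x : ℕ → Option X | ∃ m, N ≤ m ∧ (x m).isSome = true} =
        ⋃ m, ⋃ (_ : N ≤ m), (fun x : ℕ → Option X => x m) ⁻¹' {o | o.isSome = true} := by
      ext x; simp
    rw [heq]
    exact isOpen_iUnion fun m => isOpen_iUnion fun _ =>
      (continuous_apply m).isOpen_preimage _ (isOpen_discrete _)
  · ext x
    simp [Zinf]

end Transfer


/-- for `k ≥ 2`, `A` is Π⁰ₖ in `X^ω` iff `A^b` is Π⁰ₖ in `(X ∪ {b})^ω`. -/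

theorem pi_iff_bPower_pi {X : Type} [Fintype X] [Nontrivial X] [Inhabited X]
    [TopologicalSpace X] [DiscreteTopology X]
    [TopologicalSpace (Option X)] [DiscreteTopology (Option X)]
    (k : ℕ) (hk : 2 ≤ k) (A : Set (ℕ → X)) :
    PiClass k A ↔ PiClass k (bPower A) := by
  have hk1 : k - 1 = (k - 2) + 1 := by omega
  constructor
  · intro hA
    unfold PiClass at hA ⊢
    rw [hk1] at hA ⊢
    obtain ⟨f, hf, hfeq⟩ := hA
    choose T hT hTeq using fun i => (transfer (X := X) (k - 2)).1 (f i) (hf i)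
    have hbp : bPower A = (⋂ i, T i) ∩ Zinf X := by
      have h0 : bPower A = phi ⁻¹' A ∩ Zinf X := by
        ext x
        simp only [bPower, Set.mem_setOf_eq, Set.mem_inter_iff, Set.mem_preimage]
        tauto
      rw [h0, hfeq, Set.preimage_iInter, Set.iInter_inter, Set.iInter_inter]
      exact Set.iInter_congr hTeq
    rw [hbp]
    exact pii_inter ⟨T, hT, rfl⟩ (pii_le (by omega : 1 ≤ k - 2 + 1) zinf_pi1)
  · intro hB
    unfold PiClass at hB ⊢
    have hiota : Continuous (fun (x : ℕ → X) (n : ℕ) => some (x n)) :=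
      continuous_pi fun i =>
        (continuous_of_discreteTopology (f := (Option.some : X → Option X))).comp
          (continuous_apply i)
    have hAeq : A = (fun (x : ℕ → X) (n : ℕ) => some (x n)) ⁻¹' bPower A := by
      ext x
      simp only [Set.mem_preimage, bPower, Set.mem_setOf_eq]
      have h1 : (fun n => some (x n)) ∈ Zinf X := fun N => ⟨N, le_rfl, rfl⟩
      have h2 : phi (fun n => some (x n)) = x := by
        funext n
        unfold phi
        rw [Nat.nth_of_forall
          (p := fun m => ((fun n : ℕ => (some (x n) : Option X)) m).isSome = true)
          (fun m _ => rfl)]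
        rfl
      rw [h2]
      simp [h1]
    rw [hAeq]
    exact (sp_preimage hiota (k - 1)).2 _ hB
end

section
/- For every integer k ≥ 3 and every A ⊆ X^ω: A is a Σ⁰ₖ subset of X^ω if and only if A^b is a Σ⁰ₖ subset of (X ∪ {b})^ω. -/
open Set

namespace SP


def cyl {Y : Type*} (w : List Y) : Set (ℕ → Y) := {x | PrefixOf w x}

def take' {Y : Type*} (x : ℕ → Y) (m : ℕ) : List Y := List.ofFn (fun i : Fin m => x i)

@[simp] lemma length_take' {Y : Type*} (x : ℕ → Y) (m : ℕ) : (take' x m).length = m := by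
  simp [take']

lemma get_take' {Y : Type*} (x : ℕ → Y) (m i : ℕ) (h : i < (take' x m).length) :
    (take' x m).get ⟨i, h⟩ = x i := by
  simp [take']

lemma prefixOf_take' {Y : Type*} (x : ℕ → Y) (m : ℕ) : PrefixOf (take' x m) x :=
  fun i h => get_take' x m i h

lemma cyl_eq {Y : Type*} (w : List Y) :
    cyl w = ⋂ i : Fin w.length, (fun x : ℕ → Y => x i) ⁻¹' {w.get i} := by
  ext x
  simp only [cyl, mem_setOf_eq, PrefixOf, mem_iInter, mem_preimage, mem_singleton_iff]
  exact ⟨fun h i => (h i i.2).symm, fun h i hi => (h ⟨i, hi⟩).symm⟩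

lemma isOpen_cyl {Y : Type*} [TopologicalSpace Y] [DiscreteTopology Y] (w : List Y) :
    IsOpen (cyl w) := by
  rw [cyl_eq]
  exact isOpen_iInter_of_finite fun i => (continuous_apply (i : ℕ)).isOpen_preimage _ (isOpen_discrete _)

lemma isClosed_cyl {Y : Type*} [TopologicalSpace Y] [DiscreteTopology Y] (w : List Y) :
    IsClosed (cyl w) := by
  rw [cyl_eq]
  exact isClosed_iInter fun i => (isClosed_discrete _).preimage (continuous_apply (i : ℕ))

lemma exists_cyl_subset {Y : Type*} [TopologicalSpace Y] [DiscreteTopology Y]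
    {U : Set (ℕ → Y)} (hU : IsOpen U) {x : ℕ → Y} (hx : x ∈ U) :
    ∃ m, cyl (take' x m) ⊆ U := by
  obtain ⟨I, u, h1, h2⟩ := isOpen_pi_iff.1 hU x hx
  refine ⟨(I.sup id) + 1, fun z hz => h2 ?_⟩
  intro a ha
  have halt : a < I.sup id + 1 := Nat.lt_succ_of_le (Finset.le_sup (f := id) ha)
  have hz' : z a = x a := by
    have h3 := hz a (by simpa using halt)
    rw [get_take'] at h3
    exact h3.symm
  rw [hz']
  exact (h1 a ha).2


variable {α β : Type*} [TopologicalSpace α] [TopologicalSpace β]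

lemma spa_preimage {f : α → β} (hf : Continuous f) :
    ∀ n, (∀ s, (sigmaPiAux β n).1 s → (sigmaPiAux α n).1 (f ⁻¹' s)) ∧
      (∀ s, (sigmaPiAux β n).2 s → (sigmaPiAux α n).2 (f ⁻¹' s))
  | 0 => ⟨fun _ hs => hs.preimage hf, fun _ hs => hs.preimage hf⟩
  | n+1 => by
    obtain ⟨ih1, ih2⟩ := spa_preimage hf n
    constructor
    · rintro s ⟨g, hg, rfl⟩
      exact ⟨fun i => f ⁻¹' g i, fun i => ih2 _ (hg i), by simp [preimage_iUnion]⟩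
    · rintro s ⟨g, hg, rfl⟩
      exact ⟨fun i => f ⁻¹' g i, fun i => ih1 _ (hg i), by simp [preimage_iInter]⟩

lemma spa_inter :
    ∀ n, (∀ s t : Set α, (sigmaPiAux α n).1 s → (sigmaPiAux α n).1 t → (sigmaPiAux α n).1 (s ∩ t)) ∧
      (∀ s t : Set α, (sigmaPiAux α n).2 s → (sigmaPiAux α n).2 t → (sigmaPiAux α n).2 (s ∩ t))
  | 0 => ⟨fun _ _ hs ht => hs.inter ht, fun _ _ hs ht => hs.inter ht⟩
  | n+1 => by
    obtain ⟨ih1, ih2⟩ := spa_inter n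
    constructor
    · rintro s t ⟨g, hg, rfl⟩ ⟨h, hh, rfl⟩
      refine ⟨fun p => g p.unpair.1 ∩ h p.unpair.2, fun p => ih2 _ _ (hg _) (hh _), ?_⟩
      ext z
      simp only [mem_inter_iff, mem_iUnion]
      constructor
      · rintro ⟨⟨i, hi⟩, ⟨j, hj⟩⟩
        exact ⟨Nat.pair i j, by simp [Nat.unpair_pair]; exact ⟨hi, hj⟩⟩
      · rintro ⟨p, hp1, hp2⟩
        exact ⟨⟨_, hp1⟩, ⟨_, hp2⟩⟩
    · rintro s t ⟨g, hg, rfl⟩ ⟨h, hh, rfl⟩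
      refine ⟨fun p => g p.unpair.1 ∩ h p.unpair.2, fun p => ih1 _ _ (hg _) (hh _), ?_⟩
      ext z
      simp only [mem_inter_iff, mem_iInter]
      constructor
      · rintro ⟨h1, h2⟩ p
        exact ⟨h1 _, h2 _⟩
      · intro hp
        exact ⟨fun i => by simpa using (hp (Nat.pair i 0)).1, fun j => by simpa using (hp (Nat.pair 0 j)).2⟩

lemma pi_succ_of_sigma {n : ℕ} {s : Set α} (h : (sigmaPiAux α n).1 s) : (sigmaPiAux α (n+1)).2 s :=
  ⟨fun _ => s, fun _ => h, (iInter_const s).symm⟩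

lemma sigma_succ_of_pi {n : ℕ} {s : Set α} (h : (sigmaPiAux α n).2 s) : (sigmaPiAux α (n+1)).1 s :=
  ⟨fun _ => s, fun _ => h, (iUnion_const s).symm⟩

lemma spa_mono (hbase : ∀ U : Set α, IsOpen U →
      ∃ f : ℕ → Set α, (∀ n, IsOpen (f n) ∧ IsClosed (f n)) ∧ U = ⋃ n, f n) :
    ∀ n, (∀ s : Set α, (sigmaPiAux α n).1 s → (sigmaPiAux α (n+1)).1 s) ∧
      (∀ s : Set α, (sigmaPiAux α n).2 s → (sigmaPiAux α (n+1)).2 s)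
  | 0 => by
    constructor
    · intro s hs
      obtain ⟨f, hf, rfl⟩ := hbase s hs
      exact ⟨f, fun n => (hf n).2, rfl⟩
    · intro s hs
      obtain ⟨f, hf, hU⟩ := hbase sᶜ hs.isOpen_compl
      refine ⟨fun n => (f n)ᶜ, fun n => (hf n).2.isOpen_compl, ?_⟩
      rw [← compl_iUnion, ← hU, compl_compl]
  | n+1 => by
    obtain ⟨ih1, ih2⟩ := spa_mono hbase n
    constructor
    · rintro s ⟨g, hg, rfl⟩
      exact ⟨g, fun i => ih2 _ (hg i), rfl⟩
    · rintro s ⟨g, hg, rfl⟩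
      exact ⟨g, fun i => ih1 _ (hg i), rfl⟩

lemma spa_sigma_le (hbase : ∀ U : Set α, IsOpen U →
      ∃ f : ℕ → Set α, (∀ n, IsOpen (f n) ∧ IsClosed (f n)) ∧ U = ⋃ n, f n)
    {n m : ℕ} (hnm : n ≤ m) {s : Set α} (hs : (sigmaPiAux α n).1 s) : (sigmaPiAux α m).1 s := by
  induction m, hnm using Nat.le_induction with
  | base => exact hs
  | succ m _ ih => exact (spa_mono hbase m).1 _ ih



lemma open_eq_iUnion_clopen {Y : Type*} [TopologicalSpace Y] [DiscreteTopology Y] [Countable Y]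
    {U : Set (ℕ → Y)} (hU : IsOpen U) :
    ∃ f : ℕ → Set (ℕ → Y), (∀ n, IsOpen (f n) ∧ IsClosed (f n)) ∧ U = ⋃ n, f n := by
  haveI : Encodable (List Y) := Encodable.ofCountable _
  refine ⟨fun n => ⋃ (w : List Y) (_ : Encodable.encode w = n) (_ : cyl w ⊆ U), cyl w, fun n => ?_, ?_⟩
  · constructor
    · exact isOpen_iUnion fun w => isOpen_iUnion fun _ => isOpen_iUnion fun _ => isOpen_cyl w
    · by_cases h : ∃ w : List Y, Encodable.encode w = n ∧ cyl w ⊆ U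
      · obtain ⟨w, hw, hsub⟩ := h
        have : (⋃ (w' : List Y) (_ : Encodable.encode w' = n) (_ : cyl w' ⊆ U), cyl w') = cyl w := by
          ext z
          simp only [mem_iUnion]
          constructor
          · rintro ⟨w', hw', _, hz⟩
            have : w' = w := Encodable.encode_injective (by rw [hw, hw'])
            rwa [← this]
          · intro hz
            exact ⟨w, hw, hsub, hz⟩
        show IsClosed (⋃ (w' : List Y) (_ : Encodable.encode w' = n) (_ : cyl w' ⊆ U), cyl w')
        rw [this]
        exact isClosed_cyl w
      · have : (⋃ (w' : List Y) (_ : Encodable.encode w' = n) (_ : cyl w' ⊆ U), cyl w') = ∅ := by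
          ext z
          simp only [mem_iUnion, mem_empty_iff_false, iff_false]
          rintro ⟨w', hw', hsub, _⟩
          exact h ⟨w', hw', hsub⟩
        show IsClosed (⋃ (w' : List Y) (_ : Encodable.encode w' = n) (_ : cyl w' ⊆ U), cyl w')
        rw [this]
        exact isClosed_empty
  · ext x
    simp only [mem_iUnion]
    constructor
    · intro hx
      obtain ⟨m, hm⟩ := exists_cyl_subset hU hx
      exact ⟨Encodable.encode (take' x m), take' x m, rfl, hm, prefixOf_take' x m⟩
    · rintro ⟨n, w, _, hsub, hz⟩
      exact hsub hz

def psi {X : Type*} (l : List (Option X)) : List X := l.filterMap id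

lemma key {X : Type*} [Inhabited X] (x : ℕ → Option X) (n : ℕ) :
    (psi (take' x n)).length = Nat.count (fun m => (x m).isSome = true) n ∧
    PrefixOf (psi (take' x n)) (phi x) := by
  induction n with
  | zero =>
    constructor
    · simp [take', psi]
    · intro i hi
      simp [take', psi] at hi
  | succ n ih =>
    have hsplit : take' x (n+1) = take' x n ++ [x n] := by
      rw [take', List.ofFn_succ', List.concat_eq_append]
      rfl
    cases h : x n with
    | none =>
      have hps : psi (take' x (n+1)) = psi (take' x n) := by
        simp [hsplit, psi, h]
      rw [hps, Nat.count_succ]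
      simp only [h, Option.isSome_none, Bool.false_eq_true, if_false, Nat.add_zero]
      exact ih
    | some a =>
      have hps : psi (take' x (n+1)) = psi (take' x n) ++ [a] := by
        simp [hsplit, psi, h]
      have hPn : (x n).isSome = true := by simp [h]
      have hcount : Nat.count (fun m => (x m).isSome = true) (n+1)
          = Nat.count (fun m => (x m).isSome = true) n + 1 := by
        rw [Nat.count_succ]; simp [hPn]
      constructor
      · rw [hps, hcount, List.length_append, ih.1]; simp
      · intro i hi
        have hi' : i < (psi (take' x n) ++ [a]).length := by rw [← hps]; exact hi
        have hstep : (psi (take' x (n+1))).get ⟨i, hi⟩ = (psi (take' x n) ++ [a])[i]'hi' := by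
          simp only [List.get_eq_getElem]
          exact List.getElem_of_eq hps hi
        rw [hstep]
        simp only [List.length_append, List.length_singleton] at hi'
        rcases Nat.lt_or_ge i (psi (take' x n)).length with hlt | hge
        · rw [List.getElem_append_left hlt]
          have := ih.2 i hlt
          rw [List.get_eq_getElem] at this
          exact this
        · have hieq : i = (psi (take' x n)).length := le_antisymm (by omega) hge
          subst hieq
          rw [List.getElem_concat_length]
          show a = phi x (psi (take' x n)).length
          rw [ih.1]
          show a = (x (Nat.nth (fun m => (x m).isSome = true) (Nat.count (fun m => (x m).isSome = true) n))).getD default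
          rw [Nat.nth_count hPn, h]
          · rfl
          · rfl

lemma count_unbounded {X : Type*} {x : ℕ → Option X} (hx : x ∈ Zinf X) (m : ℕ) :
    ∃ n, m ≤ Nat.count (fun m => (x m).isSome = true) n := by
  induction m with
  | zero => exact ⟨0, Nat.zero_le _⟩
  | succ m ih =>
    obtain ⟨n, hn⟩ := ih
    obtain ⟨m', hm', hs⟩ := hx n
    refine ⟨m' + 1, ?_⟩
    have h1 := Nat.count_monotone (fun m => (x m).isSome = true) hm'
    rw [Nat.count_succ]
    simp only [hs, if_true]
    omega

lemma phi_some {X : Type*} [Inhabited X] (x : ℕ → X) : phi (fun n => some (x n)) = x := by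
  funext n
  have hcount : ∀ k, Nat.count (fun m => (some (x m)).isSome = true) k = k := by
    intro k
    induction k with
    | zero => simp
    | succ k ih => rw [Nat.count_succ]; simp [ih]
  have := Nat.nth_count (p := fun m => (some (x m)).isSome = true) (n := n) (by simp)
  rw [hcount n] at this
  simp [phi, this]

-- the open base case
lemma phi_open {X : Type} [Inhabited X]
    [TopologicalSpace X] [DiscreteTopology X]
    [TopologicalSpace (Option X)] [DiscreteTopology (Option X)]
    {S : Set (ℕ → X)} (hS : IsOpen S) :
    ∃ V : Set (ℕ → Option X), IsOpen V ∧ Zinf X ∩ phi ⁻¹' S = Zinf X ∩ V := by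
  refine ⟨⋃ (v : List (Option X)) (_ : cyl (psi v) ⊆ S), cyl v,
    isOpen_iUnion fun v => isOpen_iUnion fun _ => isOpen_cyl v, ?_⟩
  ext x
  simp only [mem_inter_iff, mem_preimage, mem_iUnion]
  constructor
  · rintro ⟨hxZ, hxS⟩
    refine ⟨hxZ, ?_⟩
    obtain ⟨m, hm⟩ := exists_cyl_subset hS hxS
    obtain ⟨n, hn⟩ := count_unbounded hxZ m
    rw [← (key x n).1] at hn
    refine ⟨take' x n, ?_, prefixOf_take' x n⟩
    intro z hz
    refine hm ?_
    intro i hi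
    rw [length_take'] at hi
    rw [get_take']
    have h1 := hz i (by omega)
    have h2 := (key x n).2 i (by omega)
    rw [← h1, h2]
  · rintro ⟨hxZ, v, hsub, hxv⟩
    refine ⟨hxZ, ?_⟩
    have hv : v = take' x v.length := by
      apply List.ext_get
      · rw [length_take']
      · intro i h1 h2
        rw [get_take', hxv i h1]
    refine hsub ?_
    rw [hv]
    exact (key x v.length).2

-- relativization lemma
lemma phi_rel {X : Type} [Inhabited X]
    [TopologicalSpace X] [DiscreteTopology X]
    [TopologicalSpace (Option X)] [DiscreteTopology (Option X)] :
    ∀ n, (∀ S : Set (ℕ → X), (sigmaPiAux (ℕ → X) n).1 S →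
        ∃ S', (sigmaPiAux (ℕ → Option X) n).1 S' ∧ Zinf X ∩ phi ⁻¹' S = Zinf X ∩ S') ∧
      (∀ S : Set (ℕ → X), (sigmaPiAux (ℕ → X) n).2 S →
        ∃ S', (sigmaPiAux (ℕ → Option X) n).2 S' ∧ Zinf X ∩ phi ⁻¹' S = Zinf X ∩ S')
  | 0 => by
    constructor
    · exact fun S hS => phi_open hS
    · intro S hS
      obtain ⟨V, hV, hVeq⟩ := phi_open hS.isOpen_compl
      refine ⟨Vᶜ, hV.isClosed_compl, ?_⟩
      ext x
      have h1 := Set.ext_iff.1 hVeq x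
      simp only [mem_inter_iff, mem_preimage, mem_compl_iff] at h1 ⊢
      tauto
  | n+1 => by
    obtain ⟨ih1, ih2⟩ := phi_rel (X := X) n
    constructor
    · rintro S ⟨g, hg, rfl⟩
      choose g' hg' hgeq using fun i => ih2 (g i) (hg i)
      refine ⟨⋃ i, g' i, ⟨g', hg', rfl⟩, ?_⟩
      rw [preimage_iUnion, inter_iUnion, inter_iUnion]
      exact iUnion_congr hgeq
    · rintro S ⟨g, hg, rfl⟩
      choose g' hg' hgeq using fun i => ih1 (g i) (hg i)
      refine ⟨⋂ i, g' i, ⟨g', hg', rfl⟩, ?_⟩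
      rw [preimage_iInter, inter_iInter, inter_iInter]
      exact iInter_congr hgeq

-- Zinf is Pi-2 (index 1)
lemma zinf_pi1 {X : Type} [TopologicalSpace (Option X)] [DiscreteTopology (Option X)] :
    (sigmaPiAux (ℕ → Option X) 1).2 (Zinf X) := by
  refine ⟨fun N => ⋃ m, {x : ℕ → Option X | N ≤ m ∧ (x m).isSome = true}, ?_, ?_⟩
  · intro N
    refine isOpen_iUnion fun m => ?_
    by_cases h : N ≤ m
    · have : {x : ℕ → Option X | N ≤ m ∧ (x m).isSome = true}
          = (fun x : ℕ → Option X => x m) ⁻¹' {o | o.isSome = true} := by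
        ext x; simp [h]
      rw [this]
      exact (isOpen_discrete _).preimage (continuous_apply m)
    · have : {x : ℕ → Option X | N ≤ m ∧ (x m).isSome = true} = ∅ := by
        ext x; simp [h]
      rw [this]
      exact isOpen_empty
  · ext x
    simp [Zinf, mem_iInter, mem_iUnion]
end SP

/-- for `k ≥ 3`, `A` is Σ⁰ₖ in `X^ω` iff `A^b` is Σ⁰ₖ in `(X ∪ {b})^ω`. -/
theorem sigma_iff_bPower_sigma {X : Type} [Fintype X] [Nontrivial X] [Inhabited X]
    [TopologicalSpace X] [DiscreteTopology X]
    [TopologicalSpace (Option X)] [DiscreteTopology (Option X)]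
    (k : ℕ) (hk : 3 ≤ k) (A : Set (ℕ → X)) :
    SigmaClass k A ↔ SigmaClass k (bPower A) := by
  have hbase : ∀ U : Set (ℕ → Option X), IsOpen U →
      ∃ f : ℕ → Set (ℕ → Option X), (∀ n, IsOpen (f n) ∧ IsClosed (f n)) ∧ U = ⋃ n, f n :=
    fun _ hU => SP.open_eq_iUnion_clopen hU
  constructor
  · intro hA
    obtain ⟨S', hS', hSeq⟩ := (SP.phi_rel (k - 1)).1 A hA
    have hbp : bPower A = Zinf X ∩ S' := by
      rw [← hSeq]
      rfl
    rw [SigmaClass, hbp]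
    have hz2 : (sigmaPiAux (ℕ → Option X) 2).1 (Zinf X) :=
      SP.sigma_succ_of_pi SP.zinf_pi1
    have hz : (sigmaPiAux (ℕ → Option X) (k - 1)).1 (Zinf X) :=
      SP.spa_sigma_le hbase (by omega) hz2
    exact (SP.spa_inter (k - 1)).1 _ _ hz hS'
  · intro hA
    have hcont : Continuous (fun (x : ℕ → X) (n : ℕ) => some (x n)) :=
      continuous_pi fun n => Continuous.comp continuous_of_discreteTopology (continuous_apply n)
    have hpre := (SP.spa_preimage hcont (k - 1)).1 _ hA
    have heq : A = (fun (x : ℕ → X) (n : ℕ) => some (x n)) ⁻¹' (bPower A) := by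
      ext x
      simp only [mem_preimage, bPower, mem_setOf_eq, SP.phi_some]
      constructor
      · intro hx
        exact ⟨fun N => ⟨N, le_refl N, by simp⟩, hx⟩
      · rintro ⟨_, hx⟩
        exact hx
    rw [SigmaClass, heq]
    exact hpre
end

section
/- There exists a set A ⊆ {0,1}^ω in the class Σ⁰₂ such that A^b ⊆ {0,1,b}^ω is not in Σ⁰₂; in fact A = {0,1}^ω works, since then A^b is the set of words over {0,1,b} containing infinitely many letters from {0,1}, which is Π⁰₂-complete. -/
open Set

lemma cyl_mem_nhds {Y : Type*} [TopologicalSpace Y] [DiscreteTopology Y]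
    (x : ℕ → Y) (m : ℕ) : {y : ℕ → Y | ∀ i < m, y i = x i} ∈ nhds x := by
  have : {y : ℕ → Y | ∀ i < m, y i = x i}
      = ⋂ i ∈ Finset.range m, (fun y : ℕ → Y => y i) ⁻¹' {x i} := by
    ext y; simp [Finset.mem_range]
  rw [this]
  exact (Filter.biInter_finset_mem _).mpr fun i _ =>
    ((isOpen_discrete {x i}).preimage (continuous_apply i)).mem_nhds rfl

lemma exists_cyl_subset {Y : Type*} [TopologicalSpace Y] [DiscreteTopology Y]
    {x : ℕ → Y} {U : Set (ℕ → Y)} (hU : U ∈ nhds x) :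
    ∃ m, {y : ℕ → Y | ∀ i < m, y i = x i} ⊆ U := by
  rw [nhds_pi, Filter.mem_pi] at hU
  obtain ⟨I, hI, t, ht, hsub⟩ := hU
  obtain ⟨m, hm⟩ := hI.bddAbove
  refine ⟨m + 1, fun y hy => hsub fun i hi => ?_⟩
  have : y i = x i := hy i (Nat.lt_succ_of_le (hm hi))
  rw [this]
  have := ht i
  rwa [nhds_discrete, Filter.mem_pure] at this

lemma isOpen_of_local {Y : Type*} [TopologicalSpace Y] [DiscreteTopology Y]
    {S : Set (ℕ → Y)} (h : ∀ x ∈ S, ∃ m, ∀ y, (∀ i < m, y i = x i) → y ∈ S) :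
    IsOpen S := by
  rw [isOpen_iff_mem_nhds]
  intro x hx
  obtain ⟨m, hm⟩ := h x hx
  exact Filter.mem_of_superset (cyl_mem_nhds x m) (fun y hy => hm y hy)

lemma continuous_of_local {Y Z : Type*} [TopologicalSpace Y] [DiscreteTopology Y]
    [TopologicalSpace Z] {g : (ℕ → Y) → Z}
    (h : ∀ x, ∃ m, ∀ y, (∀ i < m, y i = x i) → g y = g x) : Continuous g := by
  rw [continuous_def]
  intro s _
  apply isOpen_of_local
  intro x hx
  obtain ⟨m, hm⟩ := h x
  exact ⟨m, fun y hy => by rw [Set.mem_preimage, hm y hy]; exact hx⟩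

lemma dense_of_cyl {Y : Type*} [TopologicalSpace Y] [DiscreteTopology Y]
    {S : Set (ℕ → Y)} (h : ∀ (x : ℕ → Y) (m : ℕ), ∃ y ∈ S, ∀ i < m, y i = x i) :
    Dense S := by
  intro x
  rw [mem_closure_iff_nhds]
  intro U hU
  obtain ⟨m, hm⟩ := exists_cyl_subset hU
  obtain ⟨y, hyS, hy⟩ := h x m
  exact ⟨y, hm hy, hyS⟩


open Classical in
noncomputable def countAux {Y : Type*} (U : ℕ → Set (ℕ → Y)) (x : ℕ → Y) (k : ℕ) : ℕ :=
  ((Finset.range k).filter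
    (fun n => ∀ j ≤ n, {y : ℕ → Y | ∀ i < k, y i = x i} ⊆ U j)).card

lemma cylSet_anti {Y : Type*} (x : ℕ → Y) {k k' : ℕ} (h : k ≤ k') :
    {y : ℕ → Y | ∀ i < k', y i = x i} ⊆ {y : ℕ → Y | ∀ i < k, y i = x i} :=
  fun y hy i hi => hy i (lt_of_lt_of_le hi h)

lemma countAux_mono {Y : Type*} (U : ℕ → Set (ℕ → Y)) (x : ℕ → Y) :
    Monotone (countAux U x) := by
  classical
  apply monotone_nat_of_le_succ
  intro k
  apply Finset.card_le_card
  intro n hn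
  rw [Finset.mem_filter, Finset.mem_range] at hn ⊢
  exact ⟨Nat.lt_succ_of_lt hn.1,
    fun j hj => (cylSet_anti x (Nat.le_succ k)).trans (hn.2 j hj)⟩

lemma countAux_local {Y : Type*} (U : ℕ → Set (ℕ → Y)) (x y : ℕ → Y) (k : ℕ)
    (hxy : ∀ i < k, y i = x i) : countAux U y k = countAux U x k := by
  have h : {z : ℕ → Y | ∀ i < k, z i = y i} = {z : ℕ → Y | ∀ i < k, z i = x i} := by
    ext z
    exact ⟨fun hz i hi => (hz i hi).trans (hxy i hi),
           fun hz i hi => (hz i hi).trans (hxy i hi).symm⟩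
  unfold countAux
  rw [h]

lemma countAux_unbounded {Y : Type*} [TopologicalSpace Y] [DiscreteTopology Y]
    (U : ℕ → Set (ℕ → Y)) (hUo : ∀ j, IsOpen (U j)) (x : ℕ → Y) (hx : ∀ j, x ∈ U j)
    (n : ℕ) : ∃ k, n ≤ countAux U x k := by
  classical
  choose k hk using fun j => exists_cyl_subset ((hUo j).mem_nhds (hx j))
  refine ⟨((Finset.range (n + 1)).sup k) + n + 1, ?_⟩
  set K := ((Finset.range (n + 1)).sup k) + n + 1 with hK
  have hsub : Finset.range n ⊆ (Finset.range K).filter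
      (fun m => ∀ j ≤ m, {y : ℕ → Y | ∀ i < K, y i = x i} ⊆ U j) := by
    intro m hm
    rw [Finset.mem_range] at hm
    rw [Finset.mem_filter, Finset.mem_range]
    constructor
    · omega
    · intro j hj
      have hjk : k j ≤ K := by
        have : k j ≤ (Finset.range (n + 1)).sup k :=
          Finset.le_sup (Finset.mem_range.mpr (by omega))
        omega
      exact (cylSet_anti x hjk).trans (hk j)
  calc n = (Finset.range n).card := (Finset.card_range n).symm
    _ ≤ _ := Finset.card_le_card hsub

lemma countAux_mem {Y : Type*} (U : ℕ → Set (ℕ → Y)) (x : ℕ → Y)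
    (hx : ∀ n, ∃ k, n ≤ countAux U x k) (j : ℕ) : x ∈ U j := by
  classical
  by_contra hxj
  obtain ⟨K, hK⟩ := hx (j + 1)
  have hsub : (Finset.range K).filter
      (fun m => ∀ j' ≤ m, {y : ℕ → Y | ∀ i < K, y i = x i} ⊆ U j')
      ⊆ Finset.range j := by
    intro m hm
    rw [Finset.mem_filter] at hm
    rw [Finset.mem_range]
    by_contra hmj
    have hxc : x ∈ {y : ℕ → Y | ∀ i < K, y i = x i} := fun i _ => rfl
    exact hxj (hm.2 j (Nat.le_of_not_lt hmj) hxc)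
  have h1 : countAux U x K ≤ j := by
    unfold countAux
    calc _ ≤ (Finset.range j).card := Finset.card_le_card hsub
      _ = j := Finset.card_range j
  omega

/-- `A = {0,1}^ω` is Σ⁰₂ but `A^b` (the set of words over `{0,1,b}` with
infinitely many letters in `{0,1}`) is Π⁰₂-complete, hence not Σ⁰₂. -/
theorem exists_sigma2_bPower_not_sigma2
    [TopologicalSpace (Option Bool)] [DiscreteTopology (Option Bool)] :
    SigmaClass 2 (Set.univ : Set (ℕ → Bool)) ∧
    bPower (Set.univ : Set (ℕ → Bool)) = Zinf Bool ∧
    PiClass 2 (bPower (Set.univ : Set (ℕ → Bool))) ∧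
    (∀ (Y : Type) [Fintype Y] [TopologicalSpace Y] [DiscreteTopology Y]
        (B : Set (ℕ → Y)), PiClass 2 B → WadgeLE B (bPower (Set.univ : Set (ℕ → Bool)))) ∧
    ¬ SigmaClass 2 (bPower (Set.univ : Set (ℕ → Bool))) := by
  classical
  have h2 : bPower (Set.univ : Set (ℕ → Bool)) = Zinf Bool := by
    ext x; simp [bPower]
  refine ⟨?_, h2, ?_, ?_, ?_⟩
  · exact ⟨fun _ => Set.univ, fun _ => isClosed_univ, by rw [Set.iUnion_const]⟩
  · -- PiClass 2
    rw [h2]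
    refine ⟨fun N => {x : ℕ → Option Bool | ∃ m, N ≤ m ∧ (x m).isSome}, fun N => ?_, ?_⟩
    · apply isOpen_of_local
      rintro x ⟨m, hNm, hm⟩
      exact ⟨m + 1, fun y hy => ⟨m, hNm, by rw [hy m (Nat.lt_succ_self m)]; exact hm⟩⟩
    · ext x; simp [Zinf]
  · -- hardness
    intro Y _ _ _ B hB
    obtain ⟨U, hUo, hBU⟩ := hB
    rw [h2]
    rcases isEmpty_or_nonempty Y with hE | hNe
    · refine ⟨fun x => isEmptyElim (x 0), ?_, ?_⟩
      · rw [continuous_def]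
        intro s _
        have : ((fun x : ℕ → Y => isEmptyElim (x 0) : (ℕ → Y) → ℕ → Option Bool) ⁻¹' s) = ∅ :=
          Set.eq_empty_of_forall_notMem fun x _ => isEmptyElim (x 0)
        rw [this]; exact isOpen_empty
      · ext x; exact isEmptyElim (x 0)
    · have : Inhabited Y := Classical.inhabited_of_nonempty hNe
      have hUo' : ∀ j, IsOpen (U j) := hUo
      set f : (ℕ → Y) → ℕ → Option Bool :=
        fun x k => if countAux U x k < countAux U x (k + 1) then some true else none with hf
      have hjump : ∀ x : ℕ → Y, f x ∈ Zinf Bool ↔ ∀ n, ∃ k, n ≤ countAux U x k := by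
        intro x
        constructor
        · intro hz n
          induction n with
          | zero => exact ⟨0, Nat.zero_le _⟩
          | succ n ih =>
            obtain ⟨k, hk⟩ := ih
            obtain ⟨m, hkm, hm⟩ := hz k
            have hcond : countAux U x m < countAux U x (m + 1) := by
              by_contra hcond
              simp only [hf, if_neg hcond] at hm
              exact absurd hm (by simp)
            have := countAux_mono U x hkm
            exact ⟨m + 1, by omega⟩
        · intro hx N
          by_contra hcon
          push_neg at hcon
          have hstep : ∀ m, N ≤ m → countAux U x (m + 1) = countAux U x m := by
            intro m hm
            have h0 := hcon m hm
            by_contra hne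
            have hlt : countAux U x m < countAux U x (m + 1) :=
              lt_of_le_of_ne (countAux_mono U x (Nat.le_succ m)) (Ne.symm hne)
            simp only [hf, if_pos hlt] at h0
            simp at h0
          have hconst : ∀ d, countAux U x (N + d) = countAux U x N := by
            intro d
            induction d with
            | zero => rfl
            | succ d ih => rw [← Nat.add_assoc, hstep (N + d) (Nat.le_add_right N d), ih]
          obtain ⟨k, hk⟩ := hx (countAux U x N + 1)
          have h1 : countAux U x k ≤ countAux U x (N + k) :=
            countAux_mono U x (Nat.le_add_left k N)
          rw [hconst k] at h1
          omega
      refine ⟨f, ?_, ?_⟩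
      · apply continuous_pi
        intro k
        apply continuous_of_local
        intro x
        refine ⟨k + 1, fun y hy => ?_⟩
        simp only [hf]
        rw [countAux_local U x y (k + 1) hy,
          countAux_local U x y k (fun i hi => hy i (Nat.lt_succ_of_lt hi))]
      · rw [hBU]
        ext x
        simp only [Set.mem_preimage]
        constructor
        · intro hx
          exact (hjump x).mpr
            (countAux_unbounded U hUo' x (fun j => Set.mem_iInter.mp hx j))
        · intro hx
          exact Set.mem_iInter.mpr (countAux_mem U x ((hjump x).mp hx))
  · -- not Sigma 2
    rw [h2]
    rintro ⟨F, hFc, hF⟩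
    have hZc : Dense (Zinf Bool)ᶜ := by
      apply dense_of_cyl
      intro x m
      refine ⟨fun i => if i < m then x i else none, ?_, fun i hi => if_pos hi⟩
      simp only [Set.mem_compl_iff, Zinf, Set.mem_setOf_eq]
      push_neg
      refine ⟨m, fun m' hm' => ?_⟩
      simp [if_neg (by omega : ¬ m' < m)]
    set G : ℕ → Set (ℕ → Option Bool) := fun N => {x | ∃ m, N ≤ m ∧ (x m).isSome} with hG
    have hGopen : ∀ N, IsOpen (G N) := by
      intro N
      apply isOpen_of_local
      rintro x ⟨m, hNm, hm⟩
      exact ⟨m + 1, fun y hy => ⟨m, hNm, by rw [hy m (Nat.lt_succ_self m)]; exact hm⟩⟩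
    have hGdense : ∀ N, Dense (G N) := by
      intro N
      apply dense_of_cyl
      intro x m
      refine ⟨fun i => if i < m then x i else some true, ?_, fun i hi => if_pos hi⟩
      refine ⟨max N m, le_max_left _ _, ?_⟩
      simp [if_neg (by omega : ¬ max N m < m)]
    have hFopen : ∀ i, IsOpen (F i)ᶜ := fun i => (hFc i).isOpen_compl
    have hFdense : ∀ i, Dense (F i)ᶜ := by
      intro i
      apply hZc.mono
      apply Set.compl_subset_compl.mpr
      rw [hF]
      exact Set.subset_iUnion F i
    set fam : ℕ ⊕ ℕ → Set (ℕ → Option Bool) := Sum.elim G (fun i => (F i)ᶜ) with hfam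
    have hdense : Dense (⋂ i, fam i) :=
      dense_iInter_of_isOpen
        (fun i => by cases i with
          | inl N => exact hGopen N
          | inr n => exact hFopen n)
        (fun i => by cases i with
          | inl N => exact hGdense N
          | inr n => exact hFdense n)
    obtain ⟨x, hx⟩ := hdense.nonempty
    have hxZ : x ∈ Zinf Bool := by
      intro N
      exact Set.mem_iInter.mp hx (Sum.inl N)
    have hxnZ : x ∉ Zinf Bool := by
      rw [hF]
      rw [Set.mem_iUnion]
      rintro ⟨i, hi⟩
      exact Set.mem_iInter.mp hx (Sum.inr i) hi
    exact hxnZ hxZ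
end

section
/- If f : X → 𝒫(Y*) is a substitution with each f(a) not containing the empty word, V ⊆ X* is a dictionary, and f is extended to words and languages in the natural way, then f(V^ω) = (f(V))^ω. -/
open Set

namespace SubstAux

variable {α β X Y : Type*}

/-- Partial sums of a sequence of naturals. -/
def pS (s : ℕ → ℕ) : ℕ → ℕ
  | 0 => 0
  | n+1 => pS s n + s n

lemma pS_mono (s : ℕ → ℕ) {m n : ℕ} (h : m ≤ n) : pS s m ≤ pS s n := by
  induction n with
  | zero => simp [Nat.le_zero.mp h]
  | succ k ih =>
    rcases Nat.lt_or_ge m (k+1) with h' | h'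
    · have := ih (by omega); simp only [pS]; omega
    · have : m = k+1 := by omega
      simp [this]

lemma le_pS {s : ℕ → ℕ} (hs : ∀ i, 1 ≤ s i) : ∀ n, n ≤ pS s n := by
  intro n; induction n with
  | zero => simp [pS]
  | succ k ih => have := hs k; simp [pS]; omega

lemma flatten_range_length (u : ℕ → List α) (n : ℕ) :
    (((List.range n).map u).flatten).length = pS (fun i => (u i).length) n := by
  induction n with
  | zero => simp [pS]
  | succ k ih => simp [List.range_succ, pS, ih]

lemma flatten_range_prefix (u : ℕ → List α) {m n : ℕ} (h : m ≤ n) :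
    ((List.range m).map u).flatten <+: ((List.range n).map u).flatten := by
  obtain ⟨k, rfl⟩ := Nat.exists_eq_add_of_le h
  rw [List.range_add, List.map_append, List.flatten_append]
  exact List.prefix_append _ _

lemma flatten_range_getElem (u : ℕ → List α) {m i j : ℕ} (him : i < m)
    (hj : j < (u i).length) (hh : pS (fun i => (u i).length) i + j <
      (((List.range m).map u).flatten).length) :
    (((List.range m).map u).flatten)[pS (fun i => (u i).length) i + j] = (u i)[j] := by
  set S := pS (fun i => (u i).length) with hS
  have hlen1 : (((List.range (i+1)).map u).flatten).length = S (i+1) :=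
    flatten_range_length u (i+1)
  have hlt : S i + j < (((List.range (i+1)).map u).flatten).length := by
    rw [hlen1]; simp only [hS, pS]; omega
  have hpre := flatten_range_prefix u (Nat.succ_le_of_lt him)
  rw [← hpre.getElem hlt]
  have hsplit : ((List.range (i+1)).map u).flatten
      = ((List.range i).map u).flatten ++ u i := by
    simp [List.range_succ]
  have hlen0 : (((List.range i).map u).flatten).length = S i := flatten_range_length u i
  simp only [hsplit]
  rw [List.getElem_append_right (by omega)]
  congr 1; omega

lemma exists_block {s : ℕ → ℕ} (hs : ∀ i, 1 ≤ s i) (n : ℕ) :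
    ∃ i j, j < s i ∧ n = pS s i + j := by
  induction n with
  | zero => exact ⟨0, 0, hs 0, by simp [pS]⟩
  | succ k ih =>
    obtain ⟨i, j, hj, rfl⟩ := ih
    rcases Nat.lt_or_ge (j+1) (s i) with h | h
    · exact ⟨i, j+1, h, by omega⟩
    · exact ⟨i+1, 0, hs (i+1), by simp [pS]; omega⟩

lemma flatten_regroup (s : ℕ → ℕ) (v : ℕ → List α) : ∀ n,
    ((List.range n).map (fun i =>
      ((List.range (s i)).map (fun j => v (pS s i + j))).flatten)).flatten
    = ((List.range (pS s n)).map v).flatten := by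
  intro n
  induction n with
  | zero => simp [pS]
  | succ k ih =>
    rw [List.range_succ, List.map_append, List.flatten_append, ih]
    show _ ++ _ = _
    conv_rhs => rw [show pS s (k+1) = pS s k + s k from rfl, List.range_add]
    simp [Function.comp_def]

lemma mem_subWord_iff (f : X → Set (List Y)) (w : List X) (l : List Y) :
    l ∈ subWord f w ↔ ∃ vs : List (List Y),
      List.Forall₂ (fun a m => m ∈ f a) w vs ∧ l = vs.flatten := by
  induction w generalizing l with
  | nil =>
    constructor
    · intro h; exact ⟨[], List.Forall₂.nil, by simpa [subWord] using h⟩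
    · rintro ⟨vs, hvs, rfl⟩; cases hvs; simp [subWord]
  | cons a w ih =>
    constructor
    · rintro ⟨u, v, hu, hv, rfl⟩
      obtain ⟨vs, hvs, rfl⟩ := (ih v).mp hv
      exact ⟨u :: vs, List.Forall₂.cons hu hvs, by simp⟩
    · rintro ⟨vs, hvs, rfl⟩
      cases hvs with
      | cons hu hvs' => exact ⟨_, _, hu, (ih _).mpr ⟨_, hvs', rfl⟩, by simp⟩

lemma prefixOf_of_prefix {l₁ l₂ : List α} {x : ℕ → α} (h : l₁ <+: l₂)
    (h2 : PrefixOf l₂ x) : PrefixOf l₁ x := by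
  intro i hi
  have hi2 : i < l₂.length := lt_of_lt_of_le hi h.length_le
  rw [List.get_eq_getElem, h.getElem hi]
  have := h2 i hi2
  rwa [List.get_eq_getElem] at this

end SubstAux

namespace SubstAux

lemma pS_congr {s t : ℕ → ℕ} (h : ∀ i, s i = t i) : ∀ n, pS s n = pS t n := by
  intro n; induction n with
  | zero => rfl
  | succ k ih => simp only [pS, ih, h]

lemma getD_flatten_range {α : Type*} (u : ℕ → List α) (d : α)
    (hs : ∀ i, 1 ≤ (u i).length) {i j : ℕ} (hj : j < (u i).length) :
    ((((List.range (pS (fun k => (u k).length) i + j + 1)).map u).flatten).getD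
      (pS (fun k => (u k).length) i + j) d) = (u i)[j] := by
  have hin : pS (fun k => (u k).length) i + j <
      ((((List.range (pS (fun k => (u k).length) i + j + 1)).map u).flatten)).length := by
    rw [flatten_range_length]
    have := le_pS hs (pS (fun k => (u k).length) i + j + 1)
    omega
  rw [List.getD_eq_getElem _ _ hin]
  exact flatten_range_getElem u (by have := le_pS hs i; omega) hj hin

end SubstAux


/-- a substitution with `λ ∉ f(a)` for all `a` commutes with ω-powers:
`f(V^ω) = (f(V))^ω`. -/
theorem substitution_omegaPow {X Y : Type} [Fintype X] [Fintype Y]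
    (f : X → Set (List Y)) (hf : ∀ a, [] ∉ f a) (V : Set (List X)) :
    subOmegaImage f (omegaPow V) = omegaPow (subLang f V) := by
  ext y
  constructor
  · -- forward
    intro hy
    simp only [subOmegaImage, Set.mem_iUnion] at hy
    obtain ⟨x, hxV, hyx⟩ := hy
    obtain ⟨u, hu, hxpre⟩ := hxV
    obtain ⟨v, hv, hvy⟩ := hyx
    have hs : ∀ i, 1 ≤ (u i).length := fun i => List.length_pos_iff.mpr (hu i).2
    have hx : ∀ i j (hj : j < (u i).length),
        x (SubstAux.pS (fun k => (u k).length) i + j) = (u i)[j] := by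
      intro i j hj
      have hlt : SubstAux.pS (fun k => (u k).length) i + j <
          (((List.range (i+1)).map u).flatten).length := by
        rw [SubstAux.flatten_range_length]
        simp only [SubstAux.pS]
        omega
      have h1 := hxpre (i+1) (SubstAux.pS (fun k => (u k).length) i + j) hlt
      rw [List.get_eq_getElem] at h1
      rw [← h1]
      exact SubstAux.flatten_range_getElem u (Nat.lt_succ_self i) hj hlt
    refine ⟨fun i => ((List.range ((u i).length)).map
        (fun j => v (SubstAux.pS (fun k => (u k).length) i + j))).flatten,
      fun i => ⟨?_, ?_⟩, ?_⟩
    · -- membership in subLang f V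
      simp only [subLang, Set.mem_iUnion]
      refine ⟨u i, (hu i).1, ?_⟩
      rw [SubstAux.mem_subWord_iff]
      refine ⟨(List.range ((u i).length)).map
        (fun j => v (SubstAux.pS (fun k => (u k).length) i + j)), ?_, rfl⟩
      rw [List.forall₂_iff_get]
      refine ⟨by simp, ?_⟩
      intro j h1 h2
      simp only [List.get_eq_getElem, List.getElem_map, List.getElem_range]
      rw [← hx i j h1]
      exact hv _
    · -- nonempty
      intro hcon
      rw [List.flatten_eq_nil_iff] at hcon
      have h0 : v (SubstAux.pS (fun k => (u k).length) i + 0) = [] :=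
        hcon _ (List.mem_map.mpr ⟨0, List.mem_range.mpr (hs i), rfl⟩)
      exact hf (x (SubstAux.pS (fun k => (u k).length) i + 0)) (h0 ▸ hv _)
    · -- prefixes
      intro n
      have h1 := hvy (SubstAux.pS (fun k => (u k).length) n)
      rw [← SubstAux.flatten_regroup (fun k => (u k).length) v n] at h1
      exact h1
  · -- backward
    intro hy
    obtain ⟨w, hw, hwpre⟩ := hy
    have h1 : ∀ i, ∃ uu, uu ∈ V ∧ ∃ vv,
        List.Forall₂ (fun a m => m ∈ f a) uu vv ∧ w i = vv.flatten := by
      intro i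
      have h2 := (hw i).1
      simp only [subLang, Set.mem_iUnion] at h2
      obtain ⟨uu, huu, hsub⟩ := h2
      exact ⟨uu, huu, (SubstAux.mem_subWord_iff f uu (w i)).mp hsub⟩
    choose u huV vs hF hwf using h1
    have hune : ∀ i, u i ≠ [] := by
      intro i h
      have h2 := hF i
      rw [h, List.forall₂_nil_left_iff] at h2
      exact (hw i).2 (by rw [hwf i, h2]; rfl)
    haveI : Inhabited X := ⟨(u 0).head (hune 0)⟩
    have hs : ∀ i, 1 ≤ (u i).length := fun i => List.length_pos_iff.mpr (hune i)
    have hps : ∀ m, SubstAux.pS (fun k => (vs k).length) m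
        = SubstAux.pS (fun k => (u k).length) m :=
      SubstAux.pS_congr (fun k => ((hF k).length_eq).symm)
    have hx : ∀ i j (hj : j < (u i).length),
        (((List.range (SubstAux.pS (fun k => (u k).length) i + j + 1)).map u).flatten).getD
          (SubstAux.pS (fun k => (u k).length) i + j) default = (u i)[j] :=
      fun i j hj => SubstAux.getD_flatten_range u default hs hj
    have hv' : ∀ i j (hj : j < (vs i).length),
        (((List.range (SubstAux.pS (fun k => (u k).length) i + j + 1)).map vs).flatten).getD
          (SubstAux.pS (fun k => (u k).length) i + j) [] = (vs i)[j] := by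
      intro i j hj
      have h2 := SubstAux.getD_flatten_range vs []
        (fun k => by rw [← (hF k).length_eq]; exact hs k) hj
      rwa [hps i] at h2
    simp only [subOmegaImage, Set.mem_iUnion]
    refine ⟨fun n => (((List.range (n+1)).map u).flatten).getD n default,
      ⟨u, fun i => ⟨huV i, hune i⟩, ?_⟩,
      fun n => (((List.range (n+1)).map vs).flatten).getD n [], ?_, ?_⟩
    · -- x ∈ omegaPow V : prefixes
      intro n k hk
      obtain ⟨i, j, hj, rfl⟩ := SubstAux.exists_block hs k
      have hkn : SubstAux.pS (fun k => (u k).length) i + j <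
          SubstAux.pS (fun k => (u k).length) n := by
        rw [SubstAux.flatten_range_length] at hk
        exact hk
      have hin : i < n := by
        by_contra hc
        have := SubstAux.pS_mono (fun k => (u k).length) (Nat.not_lt.mp hc)
        omega
      rw [List.get_eq_getElem]
      rw [SubstAux.flatten_range_getElem u hin hj]
      exact (hx i j hj).symm
    · -- ∀ n, v n ∈ f (x n)
      intro n
      obtain ⟨i, j, hj, rfl⟩ := SubstAux.exists_block hs n
      have hj' : j < (vs i).length := by rw [← (hF i).length_eq]; exact hj
      show (((List.range _).map vs).flatten).getD _ [] ∈
        f ((((List.range _).map u).flatten).getD _ default)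
      rw [hx i j hj, hv' i j hj']
      have h2 := (List.forall₂_iff_get.mp (hF i)).2 j hj hj'
      simpa using h2
    · -- prefixes of v-flatten
      intro m
      refine SubstAux.prefixOf_of_prefix
        (SubstAux.flatten_range_prefix _ (SubstAux.le_pS hs m)) ?_
      have hblock : ∀ i, ((List.range ((u i).length)).map
          (fun j => (((List.range (SubstAux.pS (fun k => (u k).length) i + j + 1)).map
            vs).flatten).getD (SubstAux.pS (fun k => (u k).length) i + j) [])) = vs i := by
        intro i
        apply List.ext_getElem
        · simp [(hF i).length_eq]
        · intro j hj1 hj2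
          simp only [List.getElem_map, List.getElem_range]
          exact hv' i j hj2
      have key := SubstAux.flatten_regroup (fun k => (u k).length)
        (fun n => (((List.range (n+1)).map vs).flatten).getD n []) m
      rw [← key]
      have hfun : (fun i => (((List.range ((u i).length)).map
          (fun j => (((List.range (SubstAux.pS (fun k => (u k).length) i + j + 1)).map
            vs).flatten).getD (SubstAux.pS (fun k => (u k).length) i + j) [])).flatten)) = w := by
        funext i
        rw [hblock i, ← hwf i]
      have h3 := hwpre m
      rw [← hfun] at h3
      exact h3
end

section
/- Let X = {0,1}, d ∉ X, D = {u·d·v : u,v ∈ X*, |v| = 2|u| or |v| = 2|u|+1}, and let g be the substitution g(a) = a·D for a ∈ X. Then for every closed set F ⊆ X^ω, the image g(F) ⊆ (X∪{d})^ω is the intersection of a closed set with the Π⁰₂ set ({0,1}*·d)^ω, hence g(F) is a Π⁰₂ (in particular Borel) subset of (X∪{d})^ω. -/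
open Set

/-- `D = {u·d·v : u,v ∈ {0,1}*, |v| = 2|u| or |v| = 2|u|+1}`, with `d = none`. -/
def Ddict : Set (List (Option Bool)) :=
  {l | ∃ u v : List Bool, (v.length = 2 * u.length ∨ v.length = 2 * u.length + 1) ∧
        l = u.map some ++ [none] ++ v.map some}

/-- The substitution `g(a) = a·D`. -/
def gsub : Bool → Set (List (Option Bool)) := fun a => {l | ∃ w ∈ Ddict, l = some a :: w}

/-- `({0,1}*·d)^ω`: the words over `{0,1,d}` with infinitely many occurrences of `d`. -/
def Dinf : Set (ℕ → Option Bool) := {x | ∀ N, ∃ m, N ≤ m ∧ x m = none}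

/-!
Every word of `g(a)` contains the letter `d` exactly once. Hence if `x` has `d`'s at
positions `d₀ < d₁ < ⋯` and `y` agrees with `x` up to position `dₖ`, then in any
factorization of `y` along `g` the `i`-th block starts at or before `dᵢ` for `i ≤ k`:
otherwise one block would contain two `d`'s. So for `x ∈ closure (g(F)) ∩ ({0,1}*·d)^ω`
the factorizations of longer and longer prefixes of `x` live in the compact space
`{0,1}^ω × ∏ᵢ {0, …, dᵢ}`, where they form a nested sequence of nonempty closed sets;
a point in their intersection factorizes all of `x`, so `x ∈ g(F)`. Closed sets are `G_δ`
in the metrizable space `{0,1,d}^ω`.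
-/

section Slice

variable {α : Type*}

def slice (x : ℕ → α) (s e : ℕ) : List α := (List.range' s (e - s)).map x

@[simp]
lemma length_slice (x : ℕ → α) (s e : ℕ) : (slice x s e).length = e - s := by
  simp [slice]

@[simp]
lemma getElem_slice (x : ℕ → α) (s e k : ℕ) (hk : k < (slice x s e).length) :
    (slice x s e)[k] = x (s + k) := by
  simp [slice]

lemma mem_slice {x : ℕ → α} {s e : ℕ} {a : α} :
    a ∈ slice x s e ↔ ∃ j, s ≤ j ∧ j < e ∧ x j = a := by
  simp only [slice, List.mem_map, List.mem_range'_1]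
  constructor
  · rintro ⟨j, ⟨h₁, h₂⟩, hj⟩
    exact ⟨j, h₁, by omega, hj⟩
  · rintro ⟨j, h₁, h₂, hj⟩
    exact ⟨j, ⟨h₁, by omega⟩, hj⟩

lemma slice_append (x : ℕ → α) {s m e : ℕ} (hsm : s ≤ m) (hme : m ≤ e) :
    slice x s m ++ slice x m e = slice x s e := by
  have h := @List.range'_append s (m - s) (e - m) 1
  rw [one_mul, Nat.add_sub_cancel' hsm] at h
  rw [slice, slice, slice, ← List.map_append, h, show m - s + (e - m) = e - s by omega]

lemma slice_congr {x y : ℕ → α} {s e : ℕ} (h : ∀ j, s ≤ j → j < e → x j = y j) :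
    slice x s e = slice y s e :=
  List.map_congr_left fun j hj => by
    rw [List.mem_range'_1] at hj
    exact h j hj.1 (by omega)

lemma prefixOf_iff_eq_slice {l : List α} {x : ℕ → α} :
    PrefixOf l x ↔ l = slice x 0 l.length := by
  constructor
  · intro h
    refine List.ext_getElem (by simp) fun k hk _ => ?_
    simpa using h k hk
  · intro h i hi
    rw [List.get_eq_getElem, List.getElem_of_eq h]
    simp

lemma two_le_count_slice [BEq α] [LawfulBEq α] {x : ℕ → α} {s e j k : ℕ} {a : α}
    (hsj : s ≤ j) (hjk : j < k) (hke : k < e) (hj : x j = a) (hk : x k = a) :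
    2 ≤ (slice x s e).count a := by
  rw [← slice_append x (m := j + 1) (by omega) (by omega), List.count_append]
  have h₁ : 0 < (slice x s (j + 1)).count a :=
    List.count_pos_iff.2 (mem_slice.2 ⟨j, hsj, j.lt_succ_self, hj⟩)
  have h₂ : 0 < (slice x (j + 1) e).count a :=
    List.count_pos_iff.2 (mem_slice.2 ⟨k, hjk, hke, hk⟩)
  omega

end Slice

lemma mem_subOmega_iff {X α : Type*} {f : X → Set (List α)} {z : ℕ → X} {y : ℕ → α} :
    y ∈ subOmega f z ↔
      ∃ s : ℕ → ℕ, s 0 = 0 ∧ Monotone s ∧ ∀ i, slice y (s i) (s (i + 1)) ∈ f (z i) := by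
  constructor
  · rintro ⟨u, hu, hpre⟩
    set L : ℕ → List α := fun n => ((List.range n).map u).flatten
    have hL : ∀ n, L (n + 1) = L n ++ u n := fun n => by simp [L, List.range_succ]
    have hLs : ∀ n, L n = slice y 0 (L n).length := fun n => prefixOf_iff_eq_slice.1 (hpre n)
    refine ⟨fun n => (L n).length, by simp [L],
      monotone_nat_of_le_succ fun n => by simp [hL], fun i => ?_⟩
    have hmono : (L i).length ≤ (L (i + 1)).length := by simp [hL]
    have : L i ++ u i = L i ++ slice y (L i).length (L (i + 1)).length := by
      calc L i ++ u i = L (i + 1) := (hL i).symm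
        _ = slice y 0 (L (i + 1)).length := hLs (i + 1)
        _ = slice y 0 (L i).length ++ slice y (L i).length (L (i + 1)).length :=
          (slice_append y (Nat.zero_le _) hmono).symm
        _ = _ := by rw [← hLs i]
    exact List.append_cancel_left this ▸ hu i
  · rintro ⟨s, hs0, hs, hslice⟩
    refine ⟨fun i => slice y (s i) (s (i + 1)), hslice, fun n => prefixOf_iff_eq_slice.2 ?_⟩
    have : ((List.range n).map fun i => slice y (s i) (s (i + 1))).flatten =
        slice y 0 (s n) := by
      induction n with
      | zero => simp [slice, hs0]
      | succ n ih =>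
        rw [List.range_succ, List.map_append, List.flatten_append, ih]
        simpa using slice_append y (Nat.zero_le _) (hs n.le_succ)
    rw [this]
    simp

section BoundedParses

variable {X α : Type*}

/-- Bounding the `i`-th boundary by `d i` is what makes the space of candidates compact. -/
def boundedParses (f : X → Set (List α)) (F : Set (ℕ → X)) (x : ℕ → α) (d : ℕ → ℕ)
    (k : ℕ) : Set ((ℕ → X) × ((i : ℕ) → Fin (d i + 1))) :=
  {p | p.1 ∈ F ∧ (p.2 0 : ℕ) = 0 ∧ ∀ i < k, slice x (p.2 i) (p.2 (i + 1)) ∈ f (p.1 i)}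

lemma boundedParses_succ_subset (f : X → Set (List α)) (F : Set (ℕ → X)) (x : ℕ → α)
    (d : ℕ → ℕ) (k : ℕ) : boundedParses f F x d (k + 1) ⊆ boundedParses f F x d k :=
  fun _ ⟨hF, h0, hslice⟩ => ⟨hF, h0, fun i hi => hslice i (hi.trans k.lt_succ_self)⟩

lemma isClosed_boundedParses [TopologicalSpace X] [DiscreteTopology X] (f : X → Set (List α))
    {F : Set (ℕ → X)} (hF : IsClosed F) (x : ℕ → α) (d : ℕ → ℕ) (k : ℕ) :
    IsClosed (boundedParses f F x d k) := by
  have h0 : IsClosed {p : (ℕ → X) × ((i : ℕ) → Fin (d i + 1)) | (p.2 0 : ℕ) = 0} :=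
    (isClosed_discrete {j : Fin (d 0 + 1) | (j : ℕ) = 0}).preimage (by fun_prop)
  have hblock : ∀ i, IsClosed {p : (ℕ → X) × ((i : ℕ) → Fin (d i + 1)) |
      slice x (p.2 i) (p.2 (i + 1)) ∈ f (p.1 i)} := fun i =>
    (isClosed_discrete {q : X × Fin (d i + 1) × Fin (d (i + 1) + 1) |
      slice x q.2.1 q.2.2 ∈ f q.1}).preimage
      (by fun_prop : Continuous fun p : (ℕ → X) × ((i : ℕ) → Fin (d i + 1)) =>
        (p.1 i, p.2 i, p.2 (i + 1)))
  have hblocks : IsClosed {p : (ℕ → X) × ((i : ℕ) → Fin (d i + 1)) |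
      ∀ i < k, slice x (p.2 i) (p.2 (i + 1)) ∈ f (p.1 i)} := by
    simp only [ofPred_forall]
    exact isClosed_iInter fun i => isClosed_iInter fun _ => hblock i
  exact (hF.preimage continuous_fst).inter (h0.inter hblocks)

end BoundedParses

section SingleMarker

variable {X α : Type*} [BEq α] [LawfulBEq α] {f : X → Set (List α)} {b : α}

lemma exists_eq_of_slice_mem (hf : ∀ a, ∀ w ∈ f a, w.count b = 1) {y : ℕ → α} {s e : ℕ}
    {a : X} (h : slice y s e ∈ f a) : ∃ j, s ≤ j ∧ j < e ∧ y j = b :=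
  mem_slice.1 (List.count_pos_iff.1 (by rw [hf a _ h]; exact one_pos))

lemma strictMono_of_slice_mem (hf : ∀ a, ∀ w ∈ f a, w.count b = 1) {y : ℕ → α}
    {z : ℕ → X} {s : ℕ → ℕ} (hslice : ∀ i, slice y (s i) (s (i + 1)) ∈ f (z i)) :
    StrictMono s :=
  strictMono_nat_of_lt_succ fun i => by
    obtain ⟨j, h₁, h₂, -⟩ := exists_eq_of_slice_mem hf (hslice i)
    omega

lemma subOmega_subset_setOf_frequently (hf : ∀ a, ∀ w ∈ f a, w.count b = 1) (z : ℕ → X) :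
    subOmega f z ⊆ {x | ∀ N, ∃ m, N ≤ m ∧ x m = b} := by
  intro y hy N
  obtain ⟨s, -, -, hslice⟩ := mem_subOmega_iff.1 hy
  obtain ⟨j, hj, -, hjb⟩ := exists_eq_of_slice_mem hf (hslice N)
  exact ⟨j, ((strictMono_of_slice_mem hf hslice).id_le N).trans hj, hjb⟩

lemma le_of_forall_eq_marker (hf : ∀ a, ∀ w ∈ f a, w.count b = 1) {y : ℕ → α}
    {z : ℕ → X} {s d : ℕ → ℕ} (hs0 : s 0 = 0)
    (hslice : ∀ i, slice y (s i) (s (i + 1)) ∈ f (z i)) (hd : StrictMono d) :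
    ∀ k, (∀ i ≤ k, y (d i) = b) → s k ≤ d k := by
  intro k
  induction k with
  | zero => simp [hs0]
  | succ k ih =>
    intro hyd
    have hsk : s k ≤ d k := ih fun i hi => hyd i (hi.trans k.le_succ)
    by_contra! hlt
    have h2 := two_le_count_slice hsk (hd k.lt_succ_self) hlt (hyd k k.le_succ) (hyd _ le_rfl)
    rw [hf _ _ (hslice k)] at h2
    omega

lemma boundedParses_nonempty [TopologicalSpace α] [DiscreteTopology α]
    (hf : ∀ a, ∀ w ∈ f a, w.count b = 1) {F : Set (ℕ → X)} {x : ℕ → α}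
    (hx : x ∈ closure (subOmegaImage f F)) {d : ℕ → ℕ} (hd : StrictMono d)
    (hdb : ∀ i, x (d i) = b) (k : ℕ) : (boundedParses f F x d k).Nonempty := by
  obtain ⟨y, hyx, hy⟩ := mem_closure_iff.1 hx _ (PiNat.isOpen_cylinder _ x (d k + 1))
    (PiNat.self_mem_cylinder x _)
  obtain ⟨z, hzF, hyz⟩ := mem_iUnion₂.1 hy
  obtain ⟨σ, hσ0, -, hσ⟩ := mem_subOmega_iff.1 hyz
  have hσd : ∀ i ≤ k, σ i ≤ d i := fun i hi =>
    le_of_forall_eq_marker hf hσ0 hσ hd i fun j hj =>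
      (hyx (d j) (Nat.lt_succ_of_le (hd.monotone (hj.trans hi)))).trans (hdb j)
  refine ⟨(z, fun i => if h : i ≤ k then ⟨σ i, Nat.lt_succ_of_le (hσd i h)⟩ else 0),
    hzF, by simp [hσ0], fun i hi => ?_⟩
  simp only [dif_pos hi.le, dif_pos (Nat.succ_le_of_lt hi)]
  rw [← slice_congr fun j _ hj => hyx j ?_]
  · exact hσ i
  · have := hσd (i + 1) hi
    have : d (i + 1) ≤ d k := hd.monotone hi
    omega

theorem mem_subOmegaImage_of_mem_closure [TopologicalSpace X] [DiscreteTopology X] [Finite X]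
    [TopologicalSpace α] [DiscreteTopology α] (hf : ∀ a, ∀ w ∈ f a, w.count b = 1)
    {F : Set (ℕ → X)} (hF : IsClosed F) {x : ℕ → α}
    (hx : x ∈ closure (subOmegaImage f F)) (hxb : ∀ N, ∃ m, N ≤ m ∧ x m = b) :
    x ∈ subOmegaImage f F := by
  obtain ⟨d, hd, hdb⟩ := Filter.extraction_of_frequently_atTop (Filter.frequently_atTop.2 hxb)
  obtain ⟨⟨z, s⟩, hzs⟩ := IsCompact.nonempty_iInter_of_sequence_nonempty_isCompact_isClosed
    _ (boundedParses_succ_subset f F x d) (boundedParses_nonempty hf hx hd hdb)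
    (isClosed_boundedParses f hF x d 0).isCompact (isClosed_boundedParses f hF x d)
  rw [mem_iInter] at hzs
  have hslice : ∀ i, slice x (s i) (s (i + 1)) ∈ f (z i) := fun i =>
    (hzs (i + 1)).2.2 i i.lt_succ_self
  exact mem_biUnion (hzs 0).1 (mem_subOmega_iff.2
    ⟨fun i => s i, (hzs 0).2.1, (strictMono_of_slice_mem hf hslice).monotone, hslice⟩)

theorem subOmegaImage_eq_closure_inter [TopologicalSpace X] [DiscreteTopology X] [Finite X]
    [TopologicalSpace α] [DiscreteTopology α] (hf : ∀ a, ∀ w ∈ f a, w.count b = 1)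
    {F : Set (ℕ → X)} (hF : IsClosed F) :
    subOmegaImage f F = closure (subOmegaImage f F) ∩ {x | ∀ N, ∃ m, N ≤ m ∧ x m = b} :=
  Subset.antisymm
    (subset_inter subset_closure
      (iUnion₂_subset fun z _ => subOmega_subset_setOf_frequently hf z))
    fun _ ⟨hx, hxb⟩ => mem_subOmegaImage_of_mem_closure hf hF hx hxb

end SingleMarker

lemma isGδ_setOf_frequently_eq {α : Type*} [TopologicalSpace α] [DiscreteTopology α] (b : α) :
    IsGδ {x : ℕ → α | ∀ N, ∃ m, N ≤ m ∧ x m = b} := by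
  simp only [ofPred_forall, ofPred_exists, ofPred_and]
  exact .iInter_of_isOpen fun N => isOpen_iUnion fun m =>
    isOpen_const.inter ((isOpen_discrete {b}).preimage (continuous_apply (A := fun _ => α) m))

lemma piClass_two_iff_isGδ {β : Type*} [TopologicalSpace β] {s : Set β} :
    PiClass 2 s ↔ IsGδ s :=
  isGδ_iff_eq_iInter_nat.symm

lemma count_none_of_mem_gsub {a : Bool} {w : List (Option Bool)} (hw : w ∈ gsub a) :
    w.count none = 1 := by
  obtain ⟨_, ⟨u, v, -, rfl⟩, rfl⟩ := hw
  have hsome : ∀ l : List Bool, (l.map some).count none = 0 := fun _ =>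
    List.count_eq_zero.2 (by simp)
  simp [List.count_append, hsome]

/-- for every closed `F ⊆ {0,1}^ω`, the image `g(F)` is the intersection of a
closed set with the Π⁰₂ set `({0,1}*·d)^ω`, hence `g(F)` is Π⁰₂. -/
theorem gsub_image_closed_is_Pi02
    [TopologicalSpace (Option Bool)] [DiscreteTopology (Option Bool)]
    (F : Set (ℕ → Bool)) (hF : IsClosed F) :
    PiClass 2 Dinf ∧
    (∃ C : Set (ℕ → Option Bool), IsClosed C ∧ subOmegaImage gsub F = C ∩ Dinf) ∧
    PiClass 2 (subOmegaImage gsub F) := by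
  have hG : subOmegaImage gsub F = closure (subOmegaImage gsub F) ∩ Dinf :=
    subOmegaImage_eq_closure_inter (fun _ _ => count_none_of_mem_gsub) hF
  have hDinf : IsGδ Dinf := isGδ_setOf_frequently_eq none
  refine ⟨piClass_two_iff_isGδ.2 hDinf, ⟨_, isClosed_closure, hG⟩,
    piClass_two_iff_isGδ.2 ?_⟩
  rw [hG]
  exact isClosed_closure.isGδ.inter hDinf
end

section
/- With X = {0,1}, D and g as above, and V ⊆ X* any dictionary such that V^ω is a Σ⁰₂ subset of X^ω, the ω-power (g(V))^ω = g(V^ω) is a Borel subset of (X∪{d})^ω (it is a countable union of Π⁰₂ sets, hence Σ⁰₃). -/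
/-!
Substituting blocks commutes with taking ω-powers, so `g(V^ω) = (g(V))^ω`, and writing
`V^ω = ⋃ₙ Fₙ` with `Fₙ` closed, it suffices that `g(F)` is Π⁰₂ for closed `F`. A block `a·u·d·v`
of `g(a)` is determined by its starting position together with one bit telling whether
`|v| = 2|u|` or `|v| = 2|u| + 1`, since the first `d` fixes `|u|`. So for a given bit sequence a
word has at most one factorization into `n` blocks, and `g(F)` is the intersection of the open
sets `Uₙ` of words admitting an `n`-block factorization whose letters extend to a word of `F`: for
`y` in every `Uₙ`, compactness of the Cantor space of bit sequences yields one bit sequence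
compatible with factorizations of every length, and uniqueness makes these cohere into an infinite
factorization of `y` whose letters form a word of `F`.
-/

open Set

section Concat
variable {α β : Type*}

theorem prefixOf_iff_map_range {l : List α} {x : ℕ → α} :
    PrefixOf l x ↔ (List.range l.length).map x = l := by
  refine ⟨fun h => List.ext_getElem (by simp) fun i h₁ h₂ => ?_, fun h i hi => ?_⟩
  · simpa using (h i h₂).symm
  · simp only [List.get_eq_getElem]
    rw [List.getElem_of_eq h.symm hi]
    simp

theorem PrefixOf.getElem_eq {l : List α} {x : ℕ → α} (h : PrefixOf l x) {i : ℕ}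
    (hi : i < l.length) : l[i] = x i :=
  h i hi

theorem prefixOf_append_iff {l₁ l₂ : List α} {x : ℕ → α} :
    PrefixOf (l₁ ++ l₂) x ↔ PrefixOf l₁ x ∧ PrefixOf l₂ (fun n => x (l₁.length + n)) := by
  simp only [prefixOf_iff_map_range, List.length_append, List.range_add, List.map_append,
    List.map_map]
  exact ⟨fun h => List.append_inj h (by simp), fun ⟨h₁, h₂⟩ => congrArg₂ (· ++ ·) h₁ h₂⟩

theorem PrefixOf.of_prefix {l l' : List α} {x : ℕ → α} (hl : l <+: l') (h : PrefixOf l' x) :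
    PrefixOf l x := by
  obtain ⟨t, rfl⟩ := hl
  exact (prefixOf_append_iff.1 h).1

theorem PrefixOf.eq_of_length_eq {l l' : List α} {x : ℕ → α} (h : PrefixOf l x)
    (h' : PrefixOf l' x) (hlen : l.length = l'.length) : l = l' := by
  rw [← prefixOf_iff_map_range.1 h, ← prefixOf_iff_map_range.1 h', hlen]

theorem forall₂_map_range_iff {R : α → β → Prop} {x : ℕ → α} {y : ℕ → β} {n : ℕ} :
    List.Forall₂ R ((List.range n).map x) ((List.range n).map y) ↔ ∀ i < n, R (x i) (y i) := by
  simp [List.forall₂_map_left_iff, List.forall₂_map_right_iff, List.forall₂_same]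

theorem exists_prefixOf_of_chain {ls : ℕ → List α} (hchain : ∀ m n, m ≤ n → ls m <+: ls n)
    (hlen : ∀ n, n ≤ (ls n).length) : ∃ x : ℕ → α, ∀ n, PrefixOf (ls n) x := by
  refine ⟨fun i => (ls (i + 1))[i]'(hlen (i + 1)), fun n i hi => ?_⟩
  rcases le_total n (i + 1) with h | h
  · exact (hchain _ _ h).getElem hi
  · exact ((hchain _ _ h).getElem _).symm

def concatUpTo (u : ℕ → List α) (n : ℕ) : List α :=
  ((List.range n).map u).flatten

def IsOmegaConcat (u : ℕ → List α) (x : ℕ → α) : Prop :=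
  ∀ n, PrefixOf (concatUpTo u n) x

theorem mem_omegaPow_iff {V : Set (List α)} {x : ℕ → α} :
    x ∈ omegaPow V ↔ ∃ u : ℕ → List α, (∀ i, u i ∈ V ∧ u i ≠ []) ∧ IsOmegaConcat u x :=
  Iff.rfl

@[simp]
theorem concatUpTo_zero (u : ℕ → List α) : concatUpTo u 0 = [] := rfl

theorem concatUpTo_succ (u : ℕ → List α) (n : ℕ) :
    concatUpTo u (n + 1) = concatUpTo u n ++ u n := by
  simp [concatUpTo, List.range_succ]

theorem concatUpTo_prefix (u : ℕ → List α) {m n : ℕ} (h : m ≤ n) :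
    concatUpTo u m <+: concatUpTo u n := by
  induction n, h using Nat.le_induction with
  | base => exact List.prefix_refl _
  | succ n _ ih => exact ih.trans (concatUpTo_succ u n ▸ List.prefix_append _ _)

theorem le_length_concatUpTo {u : ℕ → List α} (hu : ∀ j, u j ≠ []) (n : ℕ) :
    n ≤ (concatUpTo u n).length := by
  induction n with
  | zero => simp
  | succ n ih =>
    have := List.length_pos_iff.2 (hu n)
    rw [concatUpTo_succ, List.length_append]
    omega

theorem concatUpTo_flatten (bl : ℕ → List (List α)) (n : ℕ) :
    concatUpTo (fun j => (bl j).flatten) n = (concatUpTo bl n).flatten := by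
  simp [concatUpTo, List.flatten_flatten, Function.comp_def]

theorem forall₂_concatUpTo {R : α → β → Prop} {u : ℕ → List α} {v : ℕ → List β}
    (h : ∀ j, List.Forall₂ R (u j) (v j)) (n : ℕ) :
    List.Forall₂ R (concatUpTo u n) (concatUpTo v n) := by
  induction n with
  | zero => exact List.Forall₂.nil
  | succ n ih =>
    rw [concatUpTo_succ, concatUpTo_succ]
    exact List.rel_append ih (h n)

theorem exists_isOmegaConcat {u : ℕ → List α} (hu : ∀ j, u j ≠ []) :
    ∃ x, IsOmegaConcat u x :=
  exists_prefixOf_of_chain (fun _ _ => concatUpTo_prefix u) (le_length_concatUpTo hu)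

theorem isOmegaConcat_of_cofinal {u : ℕ → List α} {x : ℕ → α}
    (h : ∀ n, ∃ m, n ≤ m ∧ PrefixOf (concatUpTo u m) x) : IsOmegaConcat u x := fun n =>
  let ⟨_, hnm, hm⟩ := h n
  hm.of_prefix (concatUpTo_prefix u hnm)

theorem IsOmegaConcat.rel {R : α → β → Prop} {u : ℕ → List α} {v : ℕ → List β}
    {x : ℕ → α} {y : ℕ → β} (hu : IsOmegaConcat u x) (hv : IsOmegaConcat v y)
    (hne : ∀ j, v j ≠ []) (hR : ∀ j, List.Forall₂ R (u j) (v j)) (i : ℕ) : R (x i) (y i) := by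
  have hR' := forall₂_concatUpTo hR (i + 1)
  have hlen := hR'.length_eq
  rw [← prefixOf_iff_map_range.1 (hu (i + 1)), ← prefixOf_iff_map_range.1 (hv (i + 1)), hlen,
    forall₂_map_range_iff] at hR'
  exact hR' i (le_length_concatUpTo hne (i + 1))

def regroup (s : ℕ → List α) (x : ℕ → β) (j : ℕ) : List β :=
  (List.range (s j).length).map fun k => x ((concatUpTo s j).length + k)

theorem concatUpTo_regroup (s : ℕ → List α) (x : ℕ → β) (n : ℕ) :
    concatUpTo (regroup s x) n = (List.range (concatUpTo s n).length).map x := by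
  induction n with
  | zero => simp
  | succ n ih =>
    rw [concatUpTo_succ, ih, concatUpTo_succ, List.length_append, List.range_add, List.map_append,
      List.map_map]
    rfl

theorem IsOmegaConcat.regroup_self {s : ℕ → List α} {x : ℕ → α} (h : IsOmegaConcat s x) :
    regroup s x = s := by
  funext j
  have := h (j + 1)
  rw [concatUpTo_succ, prefixOf_append_iff] at this
  exact prefixOf_iff_map_range.1 this.2

end Concat

section Substitution
variable {X Y : Type*} (f : X → Set (List Y))

theorem mem_subWord_iff {w : List X} {l : List Y} :
    l ∈ subWord f w ↔ ∃ bl, List.Forall₂ (fun b a => b ∈ f a) bl w ∧ l = bl.flatten := by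
  induction w generalizing l with
  | nil => simp [subWord]
  | cons a w ih =>
    simp only [subWord, mem_ofPred_eq, ih, List.forall₂_cons_right_iff]
    constructor
    · rintro ⟨b, _, hb, ⟨bl, hbl, rfl⟩, rfl⟩
      exact ⟨b :: bl, ⟨b, bl, hb, hbl, rfl⟩, rfl⟩
    · rintro ⟨_, ⟨b, bl, hb, hbl, rfl⟩, rfl⟩
      exact ⟨b, _, hb, ⟨bl, hbl, rfl⟩, rfl⟩

theorem subOmegaImage_iUnion (L : ℕ → Set (ℕ → X)) :
    subOmegaImage f (⋃ n, L n) = ⋃ n, subOmegaImage f (L n) :=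
  biUnion_iUnion _ _

theorem mem_subOmegaImage_iff {L : Set (ℕ → X)} {y : ℕ → Y} :
    y ∈ subOmegaImage f L ↔
      ∃ x ∈ L, ∃ B : ℕ → List Y, (∀ i, B i ∈ f (x i)) ∧ IsOmegaConcat B y := by
  simp [subOmegaImage, subOmega, IsOmegaConcat, concatUpTo]

theorem subOmegaImage_omegaPow (hf : ∀ a, [] ∉ f a) (V : Set (List X)) :
    subOmegaImage f (omegaPow V) = omegaPow (subLang f V) := by
  ext y
  simp only [mem_subOmegaImage_iff, mem_omegaPow_iff, subLang, mem_iUnion₂, mem_subWord_iff,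
    exists_prop]
  constructor
  · rintro ⟨x, ⟨s, hs, hsx⟩, B, hB, hBy⟩
    refine ⟨fun j => (regroup s B j).flatten,
      fun j => ⟨⟨s j, (hs j).1, regroup s B j, ?_, rfl⟩, ?_⟩, fun n => ?_⟩
    · have h : List.Forall₂ (fun b a => b ∈ f a) (regroup s B j) (regroup s x j) :=
        forall₂_map_range_iff.2 fun k _ => by exact hB _
      rwa [hsx.regroup_self] at h
    · show (regroup s B j).flatten ≠ []
      intro h
      have hB0 := List.flatten_eq_nil_iff.1 h _
        (List.mem_map.2 ⟨0, List.mem_range.2 (List.length_pos_iff.2 (hs j).2), rfl⟩)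
      exact hf _ (hB0 ▸ hB _)
    · rw [concatUpTo_flatten, concatUpTo_regroup]
      exact hBy _
  · rintro ⟨w, hw, hwy⟩
    choose hw hw_ne using hw
    choose s hsV bl hbl hw_eq using hw
    have hs_ne : ∀ j, s j ≠ [] := fun j hs => by
      have h := hbl j
      rw [hs, List.forall₂_nil_right_iff] at h
      exact hw_ne j (by rw [hw_eq, h, List.flatten_nil])
    have hbl_ne : ∀ j, bl j ≠ [] := fun j => List.ne_nil_of_length_pos <| by
      rw [(hbl j).length_eq]; exact List.length_pos_iff.2 (hs_ne j)
    obtain ⟨x, hx⟩ := exists_isOmegaConcat hs_ne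
    obtain ⟨B, hB⟩ := exists_isOmegaConcat hbl_ne
    refine ⟨x, ⟨s, fun j => ⟨hsV j, hs_ne j⟩, hx⟩, B, hB.rel hx hs_ne hbl,
      isOmegaConcat_of_cofinal fun n => ⟨_, le_length_concatUpTo hbl_ne n, ?_⟩⟩
    have hconcat : concatUpTo B (concatUpTo bl n).length = (concatUpTo bl n).flatten :=
      congrArg List.flatten (prefixOf_iff_map_range.1 (hB n))
    rw [hconcat, ← concatUpTo_flatten, ← funext hw_eq]
    exact hwy n

end Substitution

section SequenceSpace
variable {β : Type*} [TopologicalSpace β]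

theorem isClopen_setOf_map_range [DiscreteTopology β] (T : Set (List β)) (n : ℕ) :
    IsClopen {x : ℕ → β | (List.range n).map x ∈ T} := by
  have hofFn : ∀ x : ℕ → β, (List.range n).map x = List.ofFn fun i : Fin n => x i :=
    fun x => List.ext_getElem (by simp) (by simp)
  simp only [hofFn]
  exact (isClopen_discrete {g : Fin n → β | List.ofFn g ∈ T}).preimage
    (continuous_pi fun i => continuous_apply (i : ℕ))

theorem isOpen_setOf_prefixOf [DiscreteTopology β] (l : List β) :
    IsOpen {x : ℕ → β | PrefixOf l x} := by
  simp only [prefixOf_iff_map_range]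
  exact (isClopen_setOf_map_range {l} _).isOpen

theorem IsClosed.mem_of_forall_exists_eq {F : Set (ℕ → β)} (hF : IsClosed F) {x : ℕ → β}
    (h : ∀ n, ∃ z ∈ F, ∀ i < n, z i = x i) : x ∈ F := by
  choose z hzF hz using h
  refine hF.mem_of_tendsto (f := z) (b := Filter.atTop)
    (tendsto_pi_nhds.2 fun i => tendsto_nhds_of_eventually_eq ?_) (Filter.Eventually.of_forall hzF)
  exact Filter.eventually_atTop.2 ⟨i + 1, fun n hn => hz n i (by omega)⟩

end SequenceSpace

section Factorization
variable {X Y : Type*}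

def IsFactorization (f : X → Set (List Y)) (y : ℕ → Y) (bs : List (List Y)) (as : List X) :
    Prop :=
  List.Forall₂ (fun b a => b ∈ f a) bs as ∧ PrefixOf bs.flatten y

theorem IsFactorization.take {f : X → Set (List Y)} {y : ℕ → Y} {bs : List (List Y)}
    {as : List X} (h : IsFactorization f y bs as) (n : ℕ) :
    IsFactorization f y (bs.take n) (as.take n) :=
  ⟨List.forall₂_take n h.1, h.2.of_prefix (List.take_prefix n bs).flatten⟩

end Factorization

section Gsub

theorem mem_gsub_iff {a : Bool} {b : List (Option Bool)} :
    b ∈ gsub a ↔ ∃ u v : List Bool, (v.length = 2 * u.length ∨ v.length = 2 * u.length + 1) ∧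
      b = some a :: (u.map some ++ none :: v.map some) := by
  simp [gsub, Ddict]

theorem nil_not_mem_gsub (a : Bool) : [] ∉ gsub a := by
  simp [gsub]

/-- A block `a·u·d·v` of `g(a)` has length `3|u| + 2` or `3|u| + 3`, so this bit tells which of
the two lengths `|v|` has. -/
def gsubBit (b : List (Option Bool)) : Bool :=
  decide (b.length % 3 = 0)

theorem PrefixOf.gsub_block {a : Bool} {u v : List Bool} {y : ℕ → Option Bool}
    (h : PrefixOf (some a :: (u.map some ++ none :: v.map some)) y) :
    y (u.length + 1) = none ∧ ∀ k < u.length, y (k + 1) ≠ none := by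
  refine ⟨?_, fun k hk => ?_⟩
  · rw [← h.getElem_eq (by simp)]
    simp
  · rw [← h.getElem_eq (by simp; omega)]
    simp [List.getElem_append_left, hk]

theorem gsub_block_unique {a a' : Bool} {b b' : List (Option Bool)} {y : ℕ → Option Bool}
    (hb : b ∈ gsub a) (hb' : b' ∈ gsub a') (hbit : gsubBit b = gsubBit b')
    (hy : PrefixOf b y) (hy' : PrefixOf b' y) : b = b' ∧ a = a' := by
  obtain ⟨u, v, hv, rfl⟩ := mem_gsub_iff.1 hb
  obtain ⟨u', v', hv', rfl⟩ := mem_gsub_iff.1 hb'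
  have hu : u.length = u'.length := by
    obtain ⟨hd, hu⟩ := hy.gsub_block
    obtain ⟨hd', hu'⟩ := hy'.gsub_block
    rcases Nat.lt_trichotomy u.length u'.length with h | h | h
    · exact absurd hd (hu' _ h)
    · exact h
    · exact absurd hd' (hu _ h)
  have heq := hy.eq_of_length_eq hy' <| by
    simp only [gsubBit, decide_eq_decide, List.length_cons, List.length_append,
      List.length_map] at hbit ⊢
    omega
  exact ⟨heq, Option.some_inj.1 (List.cons.inj heq).1⟩

theorem IsFactorization.gsub_unique {y : ℕ → Option Bool} {bs bs' : List (List (Option Bool))}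
    {as as' : List Bool} (h : IsFactorization gsub y bs as) (h' : IsFactorization gsub y bs' as')
    (hbit : bs.map gsubBit = bs'.map gsubBit) : bs = bs' ∧ as = as' := by
  induction bs generalizing y bs' as as' with
  | nil =>
    obtain rfl : bs' = [] := List.map_eq_nil_iff.1 hbit.symm
    exact ⟨rfl, (List.forall₂_nil_left_iff.1 h.1).trans (List.forall₂_nil_left_iff.1 h'.1).symm⟩
  | cons b bs ih =>
    obtain ⟨hR, hy⟩ := h
    obtain ⟨hR', hy'⟩ := h'
    cases bs' with
    | nil => simp at hbit
    | cons b' bs' =>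
      obtain ⟨a, as, hb, hbs, rfl⟩ := List.forall₂_cons_left_iff.1 hR
      obtain ⟨a', as', hb', hbs', rfl⟩ := List.forall₂_cons_left_iff.1 hR'
      rw [List.flatten_cons, prefixOf_append_iff] at hy hy'
      simp only [List.map_cons, List.cons.injEq] at hbit
      obtain ⟨rfl, rfl⟩ := gsub_block_unique hb hb' hbit.1 hy.1 hy'.1
      obtain ⟨rfl, rfl⟩ := ih ⟨hbs, hy.2⟩ ⟨hbs', hy'.2⟩ hbit.2
      exact ⟨rfl, rfl⟩

def gsubApprox (F : Set (ℕ → Bool)) (n : ℕ) : Set (ℕ → Option Bool) :=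
  {y | ∃ bs as, as.length = n ∧ IsFactorization gsub y bs as ∧ ∃ z ∈ F, PrefixOf as z}

variable [TopologicalSpace (Option Bool)] [DiscreteTopology (Option Bool)]

theorem isOpen_gsubApprox (F : Set (ℕ → Bool)) (n : ℕ) : IsOpen (gsubApprox F n) :=
  isOpen_iff_forall_mem_open.2 fun _ ⟨bs, as, hn, hfac, hz⟩ =>
    ⟨{y | PrefixOf bs.flatten y}, fun _ hy => ⟨bs, as, hn, ⟨hfac.1, hy⟩, hz⟩,
      isOpen_setOf_prefixOf _, hfac.2⟩

end Gsub

section ClosedImage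

theorem exists_bits_of_forall_mem_gsubApprox {F : Set (ℕ → Bool)} {y : ℕ → Option Bool}
    (hy : ∀ n, y ∈ gsubApprox F n) :
    ∃ c : ℕ → Bool, ∀ n, ∃ bs as, as.length = n ∧ IsFactorization gsub y bs as ∧
      (∃ z ∈ F, PrefixOf as z) ∧ bs.map gsubBit = (List.range n).map c := by
  set C : ℕ → Set (ℕ → Bool) := fun n => {c | (List.range n).map c ∈ {l | ∃ bs as,
    as.length = n ∧ IsFactorization gsub y bs as ∧ (∃ z ∈ F, PrefixOf as z) ∧ bs.map gsubBit = l}}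
  have hclosed : ∀ n, IsClosed (C n) := fun n => (isClopen_setOf_map_range _ n).isClosed
  have hne : ∀ n, (C n).Nonempty := by
    intro n
    obtain ⟨bs, as, hn, hfac, hz⟩ := hy n
    have hlen : (bs.map gsubBit).length = n := by rw [List.length_map, hfac.1.length_eq, hn]
    refine ⟨fun i => (bs.map gsubBit).getD i false, bs, as, hn, hfac, hz, ?_⟩
    rw [← hlen, prefixOf_iff_map_range.1 fun i hi => (List.getD_eq_getElem _ _ hi).symm]
  have hanti : ∀ n, C (n + 1) ⊆ C n := by
    rintro n c ⟨bs, as, hn, hfac, ⟨z, hzF, hz⟩, hc⟩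
    refine ⟨bs.take n, as.take n, by simp [hn], hfac.take n,
      ⟨z, hzF, hz.of_prefix (List.take_prefix _ _)⟩, ?_⟩
    rw [List.map_take, hc, ← List.map_take, List.take_range, min_eq_left (Nat.le_succ n)]
  obtain ⟨c, hc⟩ := IsCompact.nonempty_iInter_of_sequence_nonempty_isCompact_isClosed C hanti hne
    (hclosed 0).isCompact hclosed
  exact ⟨c, mem_iInter.1 hc⟩

theorem subOmegaImage_gsub_eq_iInter {F : Set (ℕ → Bool)} (hF : IsClosed F) :
    subOmegaImage gsub F = ⋂ n, gsubApprox F n := by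
  refine Subset.antisymm (fun y hy => mem_iInter.2 fun n => ?_) fun y hy => ?_
  · obtain ⟨x, hx, B, hB, hBy⟩ := (mem_subOmegaImage_iff gsub).1 hy
    exact ⟨(List.range n).map B, (List.range n).map x, by simp,
      ⟨forall₂_map_range_iff.2 fun i _ => hB i, hBy n⟩, x, hx, prefixOf_iff_map_range.2 (by simp)⟩
  obtain ⟨c, hc⟩ := exists_bits_of_forall_mem_gsubApprox (mem_iInter.1 hy)
  choose bs as has hfac hext hbits using hc
  have hcoh : ∀ m n, m ≤ n → bs m = (bs n).take m ∧ as m = (as n).take m := fun m n hmn =>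
    (hfac m).gsub_unique ((hfac n).take m) <| by
      rw [List.map_take, hbits, hbits, ← List.map_take, List.take_range, min_eq_left hmn]
  have hbs_len : ∀ n, (bs n).length = n := fun n => (hfac n).1.length_eq.trans (has n)
  obtain ⟨B, hB⟩ := exists_prefixOf_of_chain
    (fun m n h => (hcoh m n h).1 ▸ List.take_prefix _ _) fun n => (hbs_len n).ge
  obtain ⟨x, hx⟩ := exists_prefixOf_of_chain
    (fun m n h => (hcoh m n h).2 ▸ List.take_prefix _ _) fun n => (has n).ge
  have hbsB : ∀ n, bs n = (List.range n).map B := fun n => by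
    rw [← prefixOf_iff_map_range.1 (hB n), hbs_len]
  have hasx : ∀ n, as n = (List.range n).map x := fun n => by
    rw [← prefixOf_iff_map_range.1 (hx n), has]
  refine (mem_subOmegaImage_iff gsub).2 ⟨x, ?_, B, fun i => ?_, fun n => ?_⟩
  · refine hF.mem_of_forall_exists_eq fun n => ?_
    obtain ⟨z, hzF, hz⟩ := hext n
    refine ⟨z, hzF, fun i hi => ?_⟩
    rw [← hz.getElem_eq (by rw [has]; exact hi), (hx n).getElem_eq]
  · have hRi := (hfac (i + 1)).1
    rw [hbsB, hasx, forall₂_map_range_iff] at hRi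
    exact hRi i (Nat.lt_succ_self i)
  · have hpre := (hfac n).2
    rwa [hbsB] at hpre

variable [TopologicalSpace (Option Bool)] [DiscreteTopology (Option Bool)]

theorem piClass_two_subOmegaImage_gsub {F : Set (ℕ → Bool)} (hF : IsClosed F) :
    PiClass 2 (subOmegaImage gsub F) :=
  ⟨gsubApprox F, isOpen_gsubApprox F, subOmegaImage_gsub_eq_iInter hF⟩

end ClosedImage

theorem sigmaPiAux_measurableSet {α : Type*} [TopologicalSpace α] (n : ℕ) (s : Set α) :
    ((sigmaPiAux α n).1 s → @MeasurableSet α (borel α) s) ∧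
      ((sigmaPiAux α n).2 s → @MeasurableSet α (borel α) s) := by
  let : MeasurableSpace α := borel α
  have : BorelSpace α := ⟨rfl⟩
  induction n generalizing s with
  | zero => exact ⟨fun h => h.measurableSet, fun h => h.measurableSet⟩
  | succ n ih =>
    refine ⟨?_, ?_⟩
    · rintro ⟨t, ht, rfl⟩
      exact MeasurableSet.iUnion fun i => (ih (t i)).2 (ht i)
    · rintro ⟨t, ht, rfl⟩
      exact MeasurableSet.iInter fun i => (ih (t i)).1 (ht i)

theorem SigmaClass.measurableSet {α : Type*} [TopologicalSpace α] {k : ℕ} {s : Set α}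
    (h : SigmaClass k s) : @MeasurableSet α (borel α) s :=
  (sigmaPiAux_measurableSet _ s).1 h

/-- if `V^ω` is Σ⁰₂ then `(g(V))^ω = g(V^ω)` is a Σ⁰₃, hence Borel,
subset of `({0,1,d})^ω`. -/
theorem gsub_omegaPow_borel
    [TopologicalSpace (Option Bool)] [DiscreteTopology (Option Bool)]
    (V : Set (List Bool)) (hV : SigmaClass 2 (omegaPow V)) :
    subOmegaImage gsub (omegaPow V) = omegaPow (subLang gsub V) ∧
    SigmaClass 3 (omegaPow (subLang gsub V)) ∧
    @MeasurableSet (ℕ → Option Bool) (borel (ℕ → Option Bool)) (omegaPow (subLang gsub V)) := by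
  have hcomm := subOmegaImage_omegaPow gsub nil_not_mem_gsub V
  obtain ⟨F, hF, hVF⟩ := hV
  have hsigma : SigmaClass 3 (omegaPow (subLang gsub V)) :=
    ⟨fun n => subOmegaImage gsub (F n), fun n => piClass_two_subOmegaImage_gsub (hF n), by
      rw [← hcomm, hVF, subOmegaImage_iUnion]⟩
  exact ⟨hcomm, hsigma, hsigma.measurableSet⟩
end

section
/- Let X be a finite alphabet, ↢ ∉ X a new letter ('eraser'), and for infinite words over X ∪ {↢} define the evaluations x^↢ (where an eraser with nothing to erase is ignored) and x^↩ (where such an eraser makes the result undefined). For any L ⊆ X^ω, the sets L∼ = {x ∈ (X∪{↢})^ω : x^↢ ∈ L} and L≈ = {x ∈ (X∪{↢})^ω : x^↩ is defined and ∈ L} are Wadge equivalent: L∼ ≤_W L≈ and L≈ ≤_W L∼. -/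
open Set

/-- Left-to-right evaluation of erasers (`none` = ↢), where an eraser with nothing to
erase is simply ignored. -/
def evalT {X : Type*} (w : List (Option X)) : List X :=
  w.foldl (fun s c => match c with | some a => s ++ [a] | none => s.dropLast) []

/-- Left-to-right evaluation of erasers, undefined (`none` result) as soon as an eraser
has nothing to erase. -/
def evalH {X : Type*} (w : List (Option X)) : Option (List X) :=
  w.foldl (fun s? c => s?.bind fun s =>
      match c with
      | some a => some (s ++ [a])
      | none => match s with | [] => none | _ :: _ => some s.dropLast)
    (some [])

/-- The prefix of length `k` of the infinite word `x`. -/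
def prefTake {X : Type*} (x : ℕ → X) (k : ℕ) : List X := (List.range k).map x

/-- `L∼ = {x : x^↢ ∈ L}`: the evaluations of the finite prefixes of `x` converge
(in Duparc's sense of eventually stable prefixes) to an infinite word lying in `L`. -/
def Ltilde {X : Type*} (L : Set (ℕ → X)) : Set (ℕ → Option X) :=
  {x | ∃ y ∈ L, ∀ k, ∃ n, ∀ p, n ≤ p → (evalT (prefTake x p)).take k = prefTake y k}

/-- `L≈ = {x : x^↩ is defined and belongs to L}`: every finite prefix of `x` evaluates
without error and the evaluations converge to an infinite word lying in `L`. -/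
def Lapprox {X : Type*} (L : Set (ℕ → X)) : Set (ℕ → Option X) :=
  {x | (∀ n, (evalH (prefTake x n)).isSome) ∧
       ∃ y ∈ L, ∀ k, ∃ n, ∀ p, n ≤ p →
          ((evalH (prefTake x p)).getD []).take k = prefTake y k}

/-!
Both reductions are computed block by block from the input read so far, hence continuous.
For `L≈ ≤ L∼`, copy the input until its ↩-evaluation first fails and output only erasers from
then on. The failure happens on an empty stack, so the ↢-evaluation of the image equals the
↩-evaluation of the input while it is defined and is empty afterwards, so it cannot converge
to an infinite word.
For `L∼ ≤ L≈`, fix a letter `a` and replace every ignored eraser by the neutral pair `a↢`.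
The image never fails; after each block its ↩-evaluation is the ↢-evaluation of the input read
so far, and inside a pair it is `[a]` while the latter is empty, which stops happening once
the input evaluations converge to an infinite word.
-/

open Filter Topology

lemma continuous_of_causal {α β : Type*} [TopologicalSpace α] [DiscreteTopology α]
    [TopologicalSpace β] {f : (ℕ → α) → ℕ → β}
    (hf : ∀ n x z, (∀ i ≤ n, x i = z i) → f x n = f z n) : Continuous f := by
  refine continuous_pi fun n => continuous_iff_continuousAt.2 fun x => ?_
  have hnear : ∀ᶠ z in 𝓝 x, ∀ i ∈ Finset.range (n + 1), x i = z i :=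
    (eventually_all_finset _).2 fun i _ =>
      (continuous_apply i).continuousAt.eventually_mem ((isOpen_discrete {x i}).mem_nhds rfl)
        |>.mono fun z hz => hz.symm
  exact tendsto_const_nhds.congr' <| hnear.mono fun z hz =>
    hf n x z fun i hi => hz i (Finset.mem_range.2 (Nat.lt_succ_of_le hi))

section Evaluation

variable {X : Type*}

def evalTStep : List X → Option X → List X
  | s, some a => s ++ [a]
  | s, none => s.dropLast

def evalHStep : List X → Option X → Option (List X)
  | s, some a => some (s ++ [a])
  | [], none => none
  | s@(_ :: _), none => some s.dropLast

lemma evalT_concat (w : List (Option X)) (c : Option X) :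
    evalT (w ++ [c]) = evalTStep (evalT w) c := by
  cases c <;> simp [evalT, evalTStep, List.foldl_append]

lemma evalH_concat (w : List (Option X)) (c : Option X) :
    evalH (w ++ [c]) = (evalH w).bind (evalHStep · c) := by
  simp only [evalH, List.foldl_append, List.foldl_cons, List.foldl_nil]
  congr 1
  funext s
  rcases c with _ | a <;> rcases s with _ | ⟨b, s⟩ <;> rfl

lemma evalTStep_eq_of_evalHStep_eq_some {s t : List X} {c : Option X}
    (h : evalHStep s c = some t) : evalTStep s c = t := by
  rcases c with _ | a <;> rcases s with _ | ⟨b, s⟩ <;> simp_all [evalHStep, evalTStep]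

lemma eq_nil_of_evalHStep_eq_none {s : List X} {c : Option X} (h : evalHStep s c = none) :
    s = [] := by
  rcases c with _ | a <;> rcases s with _ | ⟨b, s⟩ <;> simp_all [evalHStep]

lemma evalH_append_of_eq_none {w : List (Option X)} (h : evalH w = none) (v : List (Option X)) :
    evalH (w ++ v) = none := by
  induction v using List.reverseRecOn with
  | nil => simpa using h
  | append_singleton v c ih => rw [← List.append_assoc, evalH_concat, ih, Option.bind_none]

end Evaluation

section Prefixes

variable {X : Type*}

lemma prefTake_succ (x : ℕ → X) (n : ℕ) : prefTake x (n + 1) = prefTake x n ++ [x n] := by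
  simp [prefTake, List.range_succ]

lemma length_prefTake (x : ℕ → X) (n : ℕ) : (prefTake x n).length = n := by
  simp [prefTake]

lemma prefTake_congr {x z : ℕ → X} {n : ℕ} (h : ∀ i < n, x i = z i) :
    prefTake x n = prefTake z n :=
  List.map_congr_left fun i hi => h i (List.mem_range.mp hi)

lemma prefTake_add (x : ℕ → X) (m n : ℕ) :
    ∃ v, prefTake x (m + n) = prefTake x m ++ v := by
  simp [prefTake, List.range_add]

lemma evalH_prefTake_eq_none_of_le {x : ℕ → Option X} {m n : ℕ}
    (h : evalH (prefTake x m) = none) (hmn : m ≤ n) : evalH (prefTake x n) = none := by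
  obtain ⟨k, rfl⟩ := Nat.exists_eq_add_of_le hmn
  obtain ⟨v, hv⟩ := prefTake_add x m k
  rw [hv, evalH_append_of_eq_none h]

end Prefixes

section Convergence

variable {X : Type*}

def ConvergesTo (s : ℕ → List X) (y : ℕ → X) : Prop :=
  ∀ k, ∀ᶠ p in atTop, (s p).take k = prefTake y k

lemma ConvergesTo.comp_tendsto {s : ℕ → List X} {y : ℕ → X} (h : ConvergesTo s y)
    {m : ℕ → ℕ} (hm : Tendsto m atTop atTop) : ConvergesTo (s ∘ m) y :=
  fun k => hm.eventually (h k)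

lemma ConvergesTo.congr {s t : ℕ → List X} {y : ℕ → X} (h : ConvergesTo s y)
    (hst : s =ᶠ[atTop] t) : ConvergesTo t y :=
  fun k => (h k).congr (hst.mono fun p hp => by rw [hp])

lemma ConvergesTo.eventually_ne_nil {s : ℕ → List X} {y : ℕ → X} (h : ConvergesTo s y) :
    ∀ᶠ p in atTop, s p ≠ [] :=
  (h 1).mono fun p hp hnil => by simp [hnil, prefTake] at hp

lemma mem_Ltilde_iff {L : Set (ℕ → X)} {x : ℕ → Option X} :
    x ∈ Ltilde L ↔ ∃ y ∈ L, ConvergesTo (fun p => evalT (prefTake x p)) y := by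
  simp [Ltilde, ConvergesTo, eventually_atTop]

lemma mem_Lapprox_iff {L : Set (ℕ → X)} {x : ℕ → Option X} :
    x ∈ Lapprox L ↔ (∀ n, (evalH (prefTake x n)).isSome) ∧
      ∃ y ∈ L, ConvergesTo (fun p => (evalH (prefTake x p)).getD []) y := by
  simp [Lapprox, ConvergesTo, eventually_atTop]

end Convergence

section Truncation

variable {X : Type*}

def truncateAtError (x : ℕ → Option X) (n : ℕ) : Option X :=
  if (evalH (prefTake x (n + 1))).isSome then x n else none

lemma evalT_prefTake_truncateAtError (x : ℕ → Option X) (p : ℕ) :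
    evalT (prefTake (truncateAtError x) p) = (evalH (prefTake x p)).getD [] := by
  induction p with
  | zero => rfl
  | succ p ih =>
    rw [prefTake_succ, evalT_concat, ih, truncateAtError, prefTake_succ, evalH_concat]
    cases hp : evalH (prefTake x p) with
    | none => rfl
    | some s =>
      cases hstep : evalHStep s (x p) with
      | none =>
        obtain rfl := eq_nil_of_evalHStep_eq_none hstep
        simp [hstep, evalTStep]
      | some t => simp [hstep, evalTStep_eq_of_evalHStep_eq_some hstep]

lemma continuous_truncateAtError [TopologicalSpace (Option X)] [DiscreteTopology (Option X)] :
    Continuous (truncateAtError (X := X)) :=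
  continuous_of_causal fun n x z h => by
    rw [truncateAtError, truncateAtError, h n le_rfl,
      prefTake_congr fun i hi => h i (Nat.lt_succ_iff.mp hi)]

lemma wadgeLE_Lapprox_Ltilde [TopologicalSpace (Option X)] [DiscreteTopology (Option X)]
    (L : Set (ℕ → X)) : WadgeLE (Lapprox L) (Ltilde L) := by
  refine ⟨truncateAtError, continuous_truncateAtError, Set.ext fun x => ?_⟩
  simp only [Set.mem_preimage, mem_Ltilde_iff, mem_Lapprox_iff,
    evalT_prefTake_truncateAtError, and_iff_right_iff_imp]
  rintro ⟨y, -, hy⟩ n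
  by_contra hn
  obtain ⟨p, hne, hp⟩ := (hy.eventually_ne_nil.and (eventually_ge_atTop n)).exists
  exact hne (by rw [evalH_prefTake_eq_none_of_le (Option.not_isSome_iff_eq_none.1 hn) hp]; rfl)

end Truncation

section Blocks

variable {β : Type*}

def concatBlocks (b : ℕ → List β) (n : ℕ) : List β := ((List.range n).map b).flatten

/-- `default` is only reached if the blocks are eventually empty. -/
def blockLimit [Inhabited β] (b : ℕ → List β) (n : ℕ) : β :=
  (concatBlocks b (n + 1)).getD n default

variable {b : ℕ → List β}

lemma concatBlocks_succ (b : ℕ → List β) (n : ℕ) :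
    concatBlocks b (n + 1) = concatBlocks b n ++ b n := by
  simp [concatBlocks, List.range_succ]

lemma concatBlocks_prefix_of_le (b : ℕ → List β) {m n : ℕ} (h : m ≤ n) :
    concatBlocks b m <+: concatBlocks b n := by
  induction h with
  | refl => exact List.prefix_refl _
  | step _ ih => exact ih.trans (concatBlocks_succ b _ ▸ List.prefix_append _ _)

lemma concatBlocks_congr {b' : ℕ → List β} {n : ℕ} (h : ∀ i < n, b i = b' i) :
    concatBlocks b n = concatBlocks b' n :=
  congrArg List.flatten (List.map_congr_left fun i hi => h i (List.mem_range.mp hi))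

lemma le_length_concatBlocks (hb : ∀ n, b n ≠ []) (n : ℕ) : n ≤ (concatBlocks b n).length := by
  induction n with
  | zero => exact Nat.zero_le _
  | succ n ih =>
    rw [concatBlocks_succ, List.length_append]
    exact Nat.add_le_add ih (List.length_pos_iff.2 (hb n))

lemma tendsto_length_concatBlocks (hb : ∀ n, b n ≠ []) :
    Tendsto (fun n => (concatBlocks b n).length) atTop atTop :=
  tendsto_atTop_mono (le_length_concatBlocks hb) tendsto_id

lemma exists_length_concatBlocks_le_lt (hb : ∀ n, b n ≠ []) (p : ℕ) :
    ∃ n, (concatBlocks b n).length ≤ p ∧ p < (concatBlocks b (n + 1)).length := by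
  have hex : ∃ n, p < (concatBlocks b (n + 1)).length :=
    ⟨p, Nat.lt_of_lt_of_le p.lt_succ_self (le_length_concatBlocks hb _)⟩
  refine ⟨Nat.find hex, ?_, Nat.find_spec hex⟩
  cases hfind : Nat.find hex with
  | zero => exact Nat.zero_le p
  | succ m => exact not_lt.1 (Nat.find_min hex (hfind ▸ m.lt_succ_self))

lemma tendsto_of_lt_length_concatBlocks {n : ℕ → ℕ}
    (hn : ∀ p, p < (concatBlocks b (n p + 1)).length) : Tendsto n atTop atTop := by
  refine tendsto_atTop_atTop.2 fun N => ⟨(concatBlocks b N).length, fun p hp => ?_⟩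
  by_contra! hlt
  exact (hn p).not_ge (le_trans ((concatBlocks_prefix_of_le b hlt).length_le) hp)

lemma prefTake_blockLimit [Inhabited β] (hb : ∀ n, b n ≠ []) {p n : ℕ}
    (h : p ≤ (concatBlocks b n).length) : prefTake (blockLimit b) p = (concatBlocks b n).take p := by
  refine List.ext_getElem (by simp [length_prefTake, h]) fun i hi _ => ?_
  rw [length_prefTake] at hi
  have hi' : i < (concatBlocks b (i + 1)).length := le_length_concatBlocks hb _
  simp only [prefTake, List.getElem_map, List.getElem_range, List.getElem_take, blockLimit,
    List.getD_eq_getElem _ _ hi']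
  rcases le_total (i + 1) n with hle | hle
  · exact (concatBlocks_prefix_of_le b hle).getElem hi'
  · exact ((concatBlocks_prefix_of_le b hle).getElem (by omega)).symm

end Blocks

section Padding

variable {X : Type*} (a : X)

def padBlock : List X → Option X → List (Option X)
  | _, some c => [some c]
  | [], none => [some a, none]
  | _ :: _, none => [none]

lemma padBlock_ne_nil (s : List X) (c : Option X) : padBlock a s c ≠ [] := by
  rcases c with _ | c <;> rcases s with _ | ⟨b, s⟩ <;> simp [padBlock]

lemma evalH_append_padBlock {w : List (Option X)} {s : List X} (hw : evalH w = some s)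
    (c : Option X) : evalH (w ++ padBlock a s c) = some (evalTStep s c) := by
  rcases c with _ | c
  · rcases s with _ | ⟨b, s⟩
    · rw [padBlock, show [some a, none] = [some a] ++ [none] from rfl, ← List.append_assoc,
        evalH_concat, evalH_concat, hw]
      rfl
    · rw [padBlock, evalH_concat, hw]
      rfl
  · rw [padBlock, evalH_concat, hw]
    rfl

lemma evalH_append_take_padBlock {w : List (Option X)} {s : List X} (hw : evalH w = some s)
    {c : Option X} {j : ℕ} (hj : j < (padBlock a s c).length) :
    evalH (w ++ (padBlock a s c).take j) = some s ∨
      evalH (w ++ (padBlock a s c).take j) = some [a] ∧ s = [] := by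
  rcases c with _ | c <;> rcases s with _ | ⟨b, s⟩ <;> simp only [padBlock, List.length_cons,
    List.length_nil] at hj <;> interval_cases j <;> simp [padBlock, evalH_concat, hw, evalHStep]

def padBlocks (x : ℕ → Option X) (i : ℕ) : List (Option X) :=
  padBlock a (evalT (prefTake x i)) (x i)

lemma padBlocks_ne_nil (x : ℕ → Option X) (i : ℕ) : padBlocks a x i ≠ [] :=
  padBlock_ne_nil a _ _

def padIgnoredErasers (x : ℕ → Option X) : ℕ → Option X := blockLimit (padBlocks a x)

lemma evalH_concatBlocks_padBlocks (x : ℕ → Option X) (n : ℕ) :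
    evalH (concatBlocks (padBlocks a x) n) = some (evalT (prefTake x n)) := by
  induction n with
  | zero => rfl
  | succ n ih =>
    rw [concatBlocks_succ, padBlocks, evalH_append_padBlock a ih, prefTake_succ, evalT_concat]

lemma evalH_prefTake_padIgnoredErasers {x : ℕ → Option X} {p n : ℕ}
    (hle : (concatBlocks (padBlocks a x) n).length ≤ p)
    (hlt : p < (concatBlocks (padBlocks a x) (n + 1)).length) :
    evalH (prefTake (padIgnoredErasers a x) p) = some (evalT (prefTake x n)) ∨
      evalH (prefTake (padIgnoredErasers a x) p) = some [a] ∧ evalT (prefTake x n) = [] := by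
  rw [padIgnoredErasers, prefTake_blockLimit (padBlocks_ne_nil a x) hlt.le, concatBlocks_succ,
    List.take_append, List.take_of_length_le hle]
  rw [concatBlocks_succ, List.length_append, padBlocks] at hlt
  exact evalH_append_take_padBlock a (evalH_concatBlocks_padBlocks a x n) (by omega)

lemma continuous_padIgnoredErasers [TopologicalSpace (Option X)] [DiscreteTopology (Option X)] :
    Continuous (padIgnoredErasers a) :=
  continuous_of_causal fun n x z h => by
    have hblocks : ∀ i < n + 1, padBlocks a x i = padBlocks a z i := fun i hi => by
      rw [padBlocks, padBlocks, h i (Nat.lt_succ_iff.mp hi),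
        prefTake_congr fun j hj => h j (by omega)]
    rw [padIgnoredErasers, padIgnoredErasers, blockLimit, blockLimit, concatBlocks_congr hblocks]

end Padding

lemma wadgeLE_Ltilde_Lapprox {X : Type*} [TopologicalSpace (Option X)]
    [DiscreteTopology (Option X)] (a : X) (L : Set (ℕ → X)) :
    WadgeLE (Ltilde L) (Lapprox L) := by
  refine ⟨padIgnoredErasers a, continuous_padIgnoredErasers a, Set.ext fun x => ?_⟩
  have hb := padBlocks_ne_nil a x
  rw [Set.mem_preimage, mem_Ltilde_iff, mem_Lapprox_iff]
  constructor
  · rintro ⟨y, hyL, hy⟩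
    choose n hle hlt using exists_length_concatBlocks_le_lt hb
    have heval := fun p => evalH_prefTake_padIgnoredErasers a (hle p) (hlt p)
    have hn := tendsto_of_lt_length_concatBlocks hlt
    have hev : ∀ᶠ p in atTop,
        evalH (prefTake (padIgnoredErasers a x) p) = some (evalT (prefTake x (n p))) :=
      (hn.eventually hy.eventually_ne_nil).mono fun p hp => (heval p).resolve_right (hp ·.2)
    refine ⟨fun p => ?_, y, hyL, (hy.comp_tendsto hn).congr (hev.mono fun p hp => by simp [hp])⟩
    rcases heval p with h | ⟨h, -⟩ <;> simp [h]
  · rintro ⟨-, y, hyL, hy⟩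
    refine ⟨y, hyL, ?_⟩
    convert hy.comp_tendsto (tendsto_length_concatBlocks hb) using 2 with q
    rw [Function.comp_apply, padIgnoredErasers, prefTake_blockLimit hb le_rfl, List.take_length,
      evalH_concatBlocks_padBlocks, Option.getD_some]

lemma wadgeLE_Ltilde_Lapprox_of_isEmpty {X : Type*} [IsEmpty X] [TopologicalSpace (Option X)]
    (L : Set (ℕ → X)) : WadgeLE (Ltilde L) (Lapprox L) :=
  ⟨id, continuous_id, by simp [Ltilde, Lapprox]⟩

theorem Ltilde_wadgeEquiv_Lapprox_general {X : Type}
    [TopologicalSpace (Option X)] [DiscreteTopology (Option X)] (L : Set (ℕ → X)) :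
    WadgeLE (Ltilde L) (Lapprox L) ∧ WadgeLE (Lapprox L) (Ltilde L) := by
  refine ⟨?_, wadgeLE_Lapprox_Ltilde L⟩
  rcases isEmpty_or_nonempty X with _ | ⟨⟨a⟩⟩
  · exact wadgeLE_Ltilde_Lapprox_of_isEmpty L
  · exact wadgeLE_Ltilde_Lapprox a L

/-- for every `L ⊆ X^ω`, the ω-languages `L∼` and `L≈` are Wadge equivalent. -/
theorem Ltilde_wadgeEquiv_Lapprox {X : Type} [Fintype X]
    [TopologicalSpace (Option X)] [DiscreteTopology (Option X)] (L : Set (ℕ → X)) :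
    WadgeLE (Ltilde L) (Lapprox L) ∧ WadgeLE (Lapprox L) (Ltilde L) :=
  Ltilde_wadgeEquiv_Lapprox_general L
end
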